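/- arXiv:1703.02748 — 9 statements merged into one kernel-verified Lean document; each statement's English description precedes it below -/
import Mathlib

section
/- Let G be an n-vertex d-regular multigraph with d ≥ 2 and n ≥ 4. If λ2(G) < d − d/6 − d/(2(n−3)), then κ(G) ≥ 2. -/
open Matrix Finset BigOperators

/-- Ascending list of the real roots (with multiplicity) of the characteristic
polynomial of a square real matrix.  For a matrix all of whose eigenvalues are
real, this is the list of eigenvalues in increasing order. -/
noncomputable def eigList {n : ℕ} (A : Matrix (Fin n) (Fin n) ℝ) : List ℝ :=
  A.charpoly.roots.sort (· ≤ ·)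

/-- The second-largest eigenvalue (counted with multiplicity) of a square real
matrix with real spectrum. -/
noncomputable def lambda2 {n : ℕ} (A : Matrix (Fin n) (Fin n) ℝ) : ℝ :=
  (eigList A).getD (n - 2) 0

/-- The underlying simple graph of a multigraph given by its adjacency matrix:
two distinct vertices are adjacent iff they are joined by at least one edge. -/
def toSimple {n : ℕ} (A : Matrix (Fin n) (Fin n) ℕ) : SimpleGraph (Fin n) :=
  SimpleGraph.fromRel (fun i j => 0 < A i j)

/-- Vertex connectivity of a multigraph: the least size of a set of vertices
whose deletion disconnects the graph or reduces it to a single vertex. -/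
noncomputable def kappa {n : ℕ} (A : Matrix (Fin n) (Fin n) ℕ) : ℕ :=
  sInf {k | ∃ S : Finset (Fin n), S.card = k ∧
    (¬ ((toSimple A).induce (↑(Sᶜ) : Set (Fin n))).Connected ∨ (Sᶜ).card = 1)}

/-- Vertex connectivity of a simple graph: the least size of a set of vertices
whose deletion disconnects the graph or reduces it to a single vertex. -/
noncomputable def kappaG {n : ℕ} (G : SimpleGraph (Fin n)) : ℕ :=
  sInf {k | ∃ S : Finset (Fin n), S.card = k ∧
    (¬ (G.induce (↑(Sᶜ) : Set (Fin n))).Connected ∨ (Sᶜ).card = 1)}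

/-- Edge connectivity of a multigraph: the least number of edges (counted with
multiplicity) whose deletion disconnects the graph.  A deleted edge multiset is
encoded by a symmetric matrix `B ≤ A`; it has `k` edges when `∑ᵢⱼ Bᵢⱼ = 2k`. -/
noncomputable def edgeConn {n : ℕ} (A : Matrix (Fin n) (Fin n) ℕ) : ℕ :=
  sInf {k | ∃ B : Matrix (Fin n) (Fin n) ℕ,
    (∀ i j, B i j ≤ A i j) ∧ (∀ i j, B i j = B j i) ∧
    (∑ i, ∑ j, B i j) = 2 * k ∧ ¬ (toSimple (A - B)).Connected}

/-- The quotient matrix `Q(d,n)` from the paper. -/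
noncomputable def Qmat (d n : ℝ) : Matrix (Fin 4) (Fin 4) ℝ :=
  !![(d+1)/2, (d-1)/2, 0, 0;
     d-1, 0, 1, 0;
     0, 1, 0, d-1;
     0, 0, (d-1)/(n-4), d-(d-1)/(n-4)]

/-- `ρ(d,n)`: the second-largest eigenvalue of `Q(d,n)`. -/
noncomputable def rho (d n : ℝ) : ℝ := lambda2 (Qmat d n)

/-- Delete one copy of the edge joining `u` and `v` from a multigraph. -/
def deleteEdge {n : ℕ} (A : Matrix (Fin n) (Fin n) ℕ) (u v : Fin n) :
    Matrix (Fin n) (Fin n) ℕ :=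
  Matrix.of fun i j => A i j - (if (i = u ∧ j = v) ∨ (i = v ∧ j = u) then 1 else 0)

/-!
If `κ(G) ≤ 1` there is a vertex `v` whose deletion leaves two nonempty parts `U`, `W` with no
edge between them (when `G` itself is disconnected, any `v` other than two separated vertices
will do). Since the all-ones vector is a top eigenvector of `A`, `λ₂` bounds the quadratic form
of `A` on its orthogonal complement, which gives
`(d - λ₂) (‖x‖² - (∑ x)² / n) ≤ ∑ᵢ xᵢ ∑ⱼ Aᵢⱼ (xᵢ - xⱼ)` for every `x`. Take `x` equal to `|W|`
on `U`, `-|U|` on `W` and a suitable `γ` at `v`; with `b`, `c` the numbers of edges from `v` to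
`U` and `W` this yields `(d - λ₂) d |U| |W| ≤ b c (|U| + |W|)`. If `|U| = 1`, all `d` edges at
the vertex of `U` go to `v`, so `c = 0` and `λ₂ ≥ d`; likewise if `|W| = 1`. Otherwise
`b c ≤ d² / 4` and `|U|, |W| ≥ 2` give `d - λ₂ ≤ d / 6 + d / (2 (n - 3))`.
-/

theorem Matrix.sum_mul_sum_mul_sub_eq {n : ℕ} {A : Matrix (Fin n) (Fin n) ℝ} {d : ℝ}
    (hrow : ∀ i, ∑ j, A i j = d) (x : Fin n → ℝ) :
    ∑ i, x i * ∑ j, A i j * (x i - x j) = d * (x ⬝ᵥ x) - x ⬝ᵥ (A *ᵥ x) := by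
  have hrow' : ∀ i, ∑ j, A i j * (x i - x j) = d * x i - (A *ᵥ x) i := fun i => by
    simp only [mul_sub, sum_sub_distrib, ← sum_mul, hrow, mulVec, dotProduct]
  simp only [hrow', dotProduct, mul_sum, ← sum_sub_distrib]
  exact sum_congr rfl fun i _ => by ring

namespace Matrix.IsHermitian

variable {n : ℕ} {A : Matrix (Fin n) (Fin n) ℝ}

theorem eigList_eq_reverse (hA : A.IsHermitian) :
    eigList A = (List.ofFn hA.eigenvalues₀).reverse := by
  have h := hA.sort_roots_charpoly_eq_eigenvalues₀
  simp only [RCLike.re_to_real, Multiset.map_id'] at h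
  rw [eigList, ← h]
  refine List.Perm.eq_reverse_of_sortedLE_of_sortedGE ?_ ?_ ?_
  · rw [← Multiset.coe_eq_coe, Multiset.sort_eq, Multiset.sort_eq]
  · exact List.sortedLE_iff_pairwise.mpr (Multiset.pairwise_sort _ _)
  · exact List.sortedGE_iff_pairwise.mpr (Multiset.pairwise_sort _ _)

theorem lambda2_eq (hA : A.IsHermitian) (hn : 2 ≤ n) :
    lambda2 A = hA.eigenvalues₀ ⟨1, by simp; omega⟩ := by
  rw [lambda2, hA.eigList_eq_reverse, List.getD_eq_getElem _ _ (by simp; omega)]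
  simp only [List.getElem_reverse, List.getElem_ofFn, List.length_ofFn]
  congr 2
  simp
  omega

theorem le_lambda2_of_ne (hA : A.IsHermitian) (hn : 2 ≤ n) {i j : Fin n} (hij : i ≠ j) {y : ℝ}
    (hi : y ≤ hA.eigenvalues i) (hj : y ≤ hA.eigenvalues j) : y ≤ lambda2 A := by
  rw [hA.lambda2_eq hn]
  unfold eigenvalues at hi hj
  set e := (Fintype.equivOfCardEq (Fintype.card_fin (Fintype.card (Fin n)))).symm
  have hne : (e i).val ≠ (e j).val := Fin.val_ne_of_ne (e.injective.ne hij)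
  rcases Nat.eq_zero_or_pos (e i).val with h | h
  · exact hj.trans (hA.eigenvalues₀_antitone (Fin.mk_le_of_le_val (by omega)))
  · exact hi.trans (hA.eigenvalues₀_antitone (Fin.mk_le_of_le_val h))

theorem dotProduct_mulVec_comm (hA : A.IsHermitian) (x y : Fin n → ℝ) :
    x ⬝ᵥ (A *ᵥ y) = (A *ᵥ x) ⬝ᵥ y := by
  rw [dotProduct_mulVec, ← mulVec_transpose, ← conjTranspose_eq_transpose_of_trivial, hA.eq]

theorem dotProduct_eq_sum_eigenvectorBasis (hA : A.IsHermitian) (x y : Fin n → ℝ) :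
    x ⬝ᵥ y = ∑ i, (⇑(hA.eigenvectorBasis i) ⬝ᵥ x) * (⇑(hA.eigenvectorBasis i) ⬝ᵥ y) := by
  have h := hA.eigenvectorBasis.sum_inner_mul_inner (WithLp.toLp 2 x) (WithLp.toLp 2 y)
  simp only [EuclideanSpace.inner_eq_star_dotProduct, star_trivial] at h
  rw [dotProduct_comm x y, ← h]
  simp [dotProduct_comm]

theorem eigenvectorBasis_dotProduct_mulVec (hA : A.IsHermitian) (i : Fin n) (x : Fin n → ℝ) :
    ⇑(hA.eigenvectorBasis i) ⬝ᵥ (A *ᵥ x) =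
      hA.eigenvalues i * (⇑(hA.eigenvectorBasis i) ⬝ᵥ x) := by
  rw [hA.dotProduct_mulVec_comm, hA.mulVec_eigenvectorBasis, smul_dotProduct, smul_eq_mul]

theorem eigenvalues_le_of_rowSum (hA : A.IsHermitian) {d : ℝ} (hnn : ∀ i j, 0 ≤ A i j)
    (hrow : ∀ i, ∑ j, A i j = d) (i : Fin n) : hA.eigenvalues i ≤ d := by
  have hev : Module.End.HasEigenvalue (toLin' A) (hA.eigenvalues i) := by
    refine Module.End.hasEigenvalue_of_hasEigenvector (x := ⇑(hA.eigenvectorBasis i)) ⟨?_, ?_⟩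
    · rw [Module.End.mem_genEigenspace_one, toLin'_apply, hA.mulVec_eigenvectorBasis]
    · exact (WithLp.ofLp_eq_zero 2).ne.2 (hA.eigenvectorBasis.orthonormal.ne_zero i)
  obtain ⟨k, hk⟩ := eigenvalue_mem_ball hev
  rw [Metric.mem_closedBall, Real.dist_eq] at hk
  have hsum : A k k + ∑ j ∈ univ.erase k, ‖A k j‖ = d := by
    simp only [Real.norm_of_nonneg (hnn k _)]
    rw [add_sum_erase _ _ (mem_univ k), hrow]
  linarith [le_abs_self (hA.eigenvalues i - A k k)]

theorem dotProduct_mulVec_le_lambda2 (hA : A.IsHermitian) (hn : 2 ≤ n) {u : Fin n → ℝ}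
    (hu : u ≠ 0) {μ : ℝ} (hAu : A *ᵥ u = μ • u) (hμ : ∀ i, hA.eigenvalues i ≤ μ)
    {x : Fin n → ℝ} (hx : u ⬝ᵥ x = 0) :
    x ⬝ᵥ (A *ᵥ x) ≤ lambda2 A * (x ⬝ᵥ x) := by
  set b := fun i => ⇑(hA.eigenvectorBasis i)
  set e := hA.eigenvalues
  have horth : ∀ i, e i ≠ μ → b i ⬝ᵥ u = 0 := fun i hi => by
    have h := hA.eigenvectorBasis_dotProduct_mulVec i u
    rw [hAu, dotProduct_smul, smul_eq_mul] at h
    exact (mul_eq_mul_right_iff.mp h).resolve_left (Ne.symm hi)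
  obtain ⟨i₀, hi₀⟩ : ∃ i₀, b i₀ ⬝ᵥ u ≠ 0 := by
    by_contra! h
    exact hu (dotProduct_self_eq_zero.mp
      (by simp [hA.dotProduct_eq_sum_eigenvectorBasis u u, b, h]))
  have he₀ : e i₀ = μ := by_contra fun h => hi₀ (horth i₀ h)
  have hterm : ∀ i, e i * (b i ⬝ᵥ x) ^ 2 ≤ lambda2 A * (b i ⬝ᵥ x) ^ 2 := by
    intro i
    by_cases hi : i = i₀
    · subst hi
      by_cases hc : b i ⬝ᵥ x = 0
      · simp [hc]
      -- `u ⊥ x` forces a second eigenvector direction `j` with eigenvalue `μ`.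
      obtain ⟨j, hji, hj⟩ : ∃ j, j ≠ i ∧ (b j ⬝ᵥ u) * (b j ⬝ᵥ x) ≠ 0 := by
        by_contra! h
        rw [hA.dotProduct_eq_sum_eigenvectorBasis, sum_eq_single i (fun j _ => h j)
          (by simp)] at hx
        exact mul_ne_zero hi₀ hc hx
      have hej : e j = μ := by_contra fun h => left_ne_zero_of_mul hj (horth j h)
      exact mul_le_mul_of_nonneg_right
        (he₀.le.trans (hA.le_lambda2_of_ne hn hji hej.ge he₀.ge)) (sq_nonneg _)
    · exact mul_le_mul_of_nonneg_right
        (hA.le_lambda2_of_ne hn hi le_rfl ((hμ i).trans he₀.ge)) (sq_nonneg _)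
  calc x ⬝ᵥ (A *ᵥ x) = ∑ i, e i * (b i ⬝ᵥ x) ^ 2 := by
        rw [hA.dotProduct_eq_sum_eigenvectorBasis]
        exact sum_congr rfl fun i _ => by
          rw [hA.eigenvectorBasis_dotProduct_mulVec]; ring
    _ ≤ ∑ i, lambda2 A * (b i ⬝ᵥ x) ^ 2 := sum_le_sum fun i _ => hterm i
    _ = lambda2 A * (x ⬝ᵥ x) := by
        rw [← mul_sum, hA.dotProduct_eq_sum_eigenvectorBasis x x]
        simp only [sq, b]

theorem sub_lambda2_mul_le (hA : A.IsHermitian) (hn : 2 ≤ n) {d : ℝ} (hnn : ∀ i j, 0 ≤ A i j)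
    (hrow : ∀ i, ∑ j, A i j = d) (x : Fin n → ℝ) :
    (d - lambda2 A) * (x ⬝ᵥ x - (∑ i, x i) ^ 2 / n) ≤ ∑ i, x i * ∑ j, A i j * (x i - x j) := by
  have hA1 : A *ᵥ 1 = d • 1 := funext fun i => by simp [mulVec, dotProduct, hrow i]
  have : NeZero n := ⟨by omega⟩
  have hnR : (n : ℝ) ≠ 0 := by positivity
  set m := (∑ i, x i) / n
  set y := x - m • 1
  have hy : 1 ⬝ᵥ y = 0 := by
    simp only [y, dotProduct_sub, dotProduct_smul, one_dotProduct, m]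
    simp [hnR]
  have hray := hA.dotProduct_mulVec_le_lambda2 hn one_ne_zero hA1
    (hA.eigenvalues_le_of_rowSum hnn hrow) hy
  have hyy : y ⬝ᵥ y = x ⬝ᵥ x - (∑ i, x i) ^ 2 / n := by
    simp only [y, dotProduct_sub, sub_dotProduct, dotProduct_smul, smul_dotProduct,
      dotProduct_one, one_dotProduct, smul_eq_mul, m]
    simp only [Pi.sub_apply, Pi.smul_apply, Pi.one_apply, sum_sub_distrib, smul_eq_mul,
      mul_one, sum_const, card_univ, Fintype.card_fin, nsmul_eq_mul]
    field_simp
    ring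
  have hyAy : y ⬝ᵥ (A *ᵥ y) = x ⬝ᵥ (A *ᵥ x) - d * (∑ i, x i) ^ 2 / n := by
    have h1x : 1 ⬝ᵥ (A *ᵥ x) = d * ∑ i, x i := by
      rw [hA.dotProduct_mulVec_comm, hA1, smul_dotProduct, one_dotProduct, smul_eq_mul]
    simp only [y, mulVec_sub, mulVec_smul, hA1, dotProduct_sub, sub_dotProduct, dotProduct_smul,
      smul_dotProduct, h1x, dotProduct_one, smul_eq_mul, m]
    simp only [Pi.sub_apply, Pi.smul_apply, Pi.one_apply, sum_sub_distrib, smul_eq_mul,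
      mul_one, sum_const, card_univ, Fintype.card_fin, nsmul_eq_mul]
    field_simp
    ring
  rw [sum_mul_sum_mul_sub_eq hrow, ← hyy]
  linear_combination hray + d * hyy - hyAy

end Matrix.IsHermitian

theorem add_div_four_le {s t : ℝ} (hs : 2 ≤ s) (ht : 2 ≤ t) :
    (s + t) / 4 ≤ s * t * (1 / 6 + 1 / (2 * (s + t - 2))) := by
  have hpos : 0 < s + t - 2 := by linarith
  rw [← sub_nonneg]
  have : s * t * (1 / 6 + 1 / (2 * (s + t - 2))) - (s + t) / 4 =
      (2 * s * t * (s + t - 2) + 6 * (s * t) - 3 * (s + t) * (s + t - 2)) /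
        (12 * (s + t - 2)) := by
    field_simp
    ring
  rw [this]
  apply div_nonneg _ (by positivity)
  nlinarith [mul_nonneg (mul_nonneg (sub_nonneg.2 hs) (sub_nonneg.2 ht))
    (by linarith : (0 : ℝ) ≤ s + t)]

theorem sub_le_of_mul_le_mul_add {d b c s t l : ℝ} (hd : 0 < d) (hbc : b + c = d)
    (hs : 2 ≤ s) (ht : 2 ≤ t) (h : (d - l) * (d * (s * t)) ≤ b * c * (s + t)) :
    d - l ≤ d / 6 + d / (2 * (s + t - 2)) := by
  have hbc4 : 4 * (b * c) ≤ d ^ 2 := by rw [← hbc]; nlinarith [sq_nonneg (b - c)]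
  have h1 : (d - l) * (s * t) ≤ d * ((s + t) / 4) := le_of_mul_le_mul_left (by nlinarith) hd
  have h2 : d * ((s + t) / 4) ≤ (d / 6 + d / (2 * (s + t - 2))) * (s * t) := by
    have := mul_le_mul_of_nonneg_left (add_div_four_le hs ht) hd.le
    rwa [show (d / 6 + d / (2 * (s + t - 2))) * (s * t) =
      d * (s * t * (1 / 6 + 1 / (2 * (s + t - 2)))) by ring]
  exact le_of_mul_le_mul_right (h1.trans h2) (by positivity)

structure IsVertexCut {α : Type*} [Zero α] {n : ℕ} (A : Matrix (Fin n) (Fin n) α) (v : Fin n)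
    (U W : Finset (Fin n)) : Prop where
  disjoint : Disjoint U W
  notMem_left : v ∉ U
  notMem_right : v ∉ W
  cover : ∀ i, i = v ∨ i ∈ U ∨ i ∈ W
  eq_zero : ∀ i ∈ U, ∀ j ∈ W, A i j = 0

namespace IsVertexCut

variable {n : ℕ} {v : Fin n} {U W : Finset (Fin n)}

section Zero

variable {α : Type*} [Zero α] {A : Matrix (Fin n) (Fin n) α}

theorem symm (h : IsVertexCut A v U W) (hsym : ∀ i j, A i j = A j i) : IsVertexCut A v W U :=
  ⟨h.disjoint.symm, h.notMem_right, h.notMem_left, fun i => by have := h.cover i; tauto,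
    fun i hi j hj => (hsym i j).trans (h.eq_zero j hj i hi)⟩

theorem map {β : Type*} [Zero β] (h : IsVertexCut A v U W) {f : α → β} (hf : f 0 = 0) :
    IsVertexCut (A.map f) v U W :=
  ⟨h.disjoint, h.notMem_left, h.notMem_right, h.cover,
    fun i hi j hj => by rw [map_apply, h.eq_zero i hi j hj, hf]⟩

theorem univ_eq (h : IsVertexCut A v U W) : (univ : Finset (Fin n)) = insert v (U ∪ W) :=
  (eq_univ_of_forall fun i => by simpa using h.cover i).symm

theorem sum_univ {M : Type*} [AddCommMonoid M] (h : IsVertexCut A v U W) (f : Fin n → M) :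
    ∑ i, f i = f v + ∑ i ∈ U, f i + ∑ i ∈ W, f i := by
  rw [h.univ_eq, sum_insert (by simp [h.notMem_left, h.notMem_right]), sum_union h.disjoint,
    add_assoc]

theorem card_add_card (h : IsVertexCut A v U W) : U.card + W.card + 1 = n := by
  have := congrArg card h.univ_eq
  rw [card_univ, Fintype.card_fin, card_insert_of_notMem (by
    simp [h.notMem_left, h.notMem_right]), card_union_of_disjoint h.disjoint] at this
  omega

theorem exists_eq_on_parts {β : Type*} (h : IsVertexCut A v U W) (γ a b : β) :
    ∃ x : Fin n → β, x v = γ ∧ (∀ i ∈ U, x i = a) ∧ ∀ i ∈ W, x i = b :=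
  ⟨fun i => if i = v then γ else if i ∈ U then a else b, by simp,
    fun i hi => by simp [ne_of_mem_of_not_mem hi h.notMem_left, hi],
    fun i hi => by simp [ne_of_mem_of_not_mem hi h.notMem_right,
      disjoint_right.mp h.disjoint hi]⟩

theorem mul_mul_add_le_dotProduct_self_sub (h : IsVertexCut A v U W) {x : Fin n → ℝ} {γ : ℝ}
    (hxv : x v = γ) (hxU : ∀ i ∈ U, x i = W.card) (hxW : ∀ i ∈ W, x i = -U.card) :
    (U.card : ℝ) * W.card * (U.card + W.card) ≤ x ⬝ᵥ x - (∑ i, x i) ^ 2 / n := by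
  have hsum : ∑ i, x i = γ := by
    rw [h.sum_univ, hxv, sum_congr rfl hxU, sum_congr rfl hxW]
    simp only [sum_const, nsmul_eq_mul]
    ring
  have hsq : x ⬝ᵥ x = γ ^ 2 + U.card * W.card * (U.card + W.card) := by
    have eU : ∑ i ∈ U, x i * x i = ∑ i ∈ U, (W.card : ℝ) * W.card :=
      sum_congr rfl fun i hi => by rw [hxU i hi]
    have eW : ∑ i ∈ W, x i * x i = ∑ i ∈ W, (-U.card : ℝ) * -U.card :=
      sum_congr rfl fun i hi => by rw [hxW i hi]
    rw [dotProduct, h.sum_univ, hxv, eU, eW]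
    simp only [sum_const, nsmul_eq_mul]
    ring
  have hn : (1 : ℝ) ≤ n := by exact_mod_cast Fin.pos v
  rw [hsum, hsq]
  linarith [div_le_self (sq_nonneg γ) hn]

end Zero

variable {A : Matrix (Fin n) (Fin n) ℝ} {d : ℝ}

theorem sum_add_sum_eq (h : IsVertexCut A v U W) (hsym : ∀ i j, A i j = A j i)
    (hdiag : A v v = 0) (hrow : ∀ i, ∑ j, A i j = d) :
    ∑ i ∈ U, A i v + ∑ i ∈ W, A i v = d := by
  simpa [h.sum_univ, hdiag, hsym v] using hrow v

theorem sum_right_eq_zero_of_card_left_eq_one (h : IsVertexCut A v U W)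
    (hsym : ∀ i j, A i j = A j i) (hdiag : ∀ i, A i i = 0) (hrow : ∀ i, ∑ j, A i j = d)
    (hU : U.card = 1) : ∑ i ∈ W, A i v = 0 := by
  obtain ⟨u, rfl⟩ := card_eq_one.mp hU
  have hrowu : A u v = d := by
    simpa [h.sum_univ, hdiag, sum_eq_zero (h.eq_zero u (mem_singleton_self u))] using hrow u
  have := h.sum_add_sum_eq hsym (hdiag v) hrow
  rw [sum_singleton, hrowu] at this
  linarith

theorem sum_mul_sum_mul_sub_eq (h : IsVertexCut A v U W) (hsym : ∀ i j, A i j = A j i)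
    {x : Fin n → ℝ} {γ a b : ℝ} (hxv : x v = γ) (hxU : ∀ i ∈ U, x i = a)
    (hxW : ∀ i ∈ W, x i = b) :
    ∑ i, x i * ∑ j, A i j * (x i - x j) =
      (∑ i ∈ U, A i v) * (a - γ) ^ 2 + (∑ i ∈ W, A i v) * (b - γ) ^ 2 := by
  have hrowU : ∀ i ∈ U, ∑ j, A i j * (x i - x j) = A i v * (a - γ) := fun i hi => by
    rw [h.sum_univ, hxv, hxU i hi,
      sum_eq_zero fun j hj => by rw [hxU j hj, sub_self, mul_zero],
      sum_eq_zero fun j hj => by rw [h.eq_zero i hi j hj, zero_mul]]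
    ring
  have hrowW : ∀ i ∈ W, ∑ j, A i j * (x i - x j) = A i v * (b - γ) := fun i hi => by
    rw [h.sum_univ, hxv, hxW i hi,
      sum_eq_zero fun j hj => by rw [hsym, h.eq_zero j hj i hi, zero_mul],
      sum_eq_zero fun j hj => by rw [hxW j hj, sub_self, mul_zero]]
    ring
  have hrowv : ∑ j, A v j * (x v - x j) =
      (∑ i ∈ U, A i v) * (γ - a) + (∑ i ∈ W, A i v) * (γ - b) := by
    have eU : ∑ j ∈ U, A v j * (γ - x j) = ∑ j ∈ U, A j v * (γ - a) :=
      sum_congr rfl fun j hj => by rw [hxU j hj, hsym]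
    have eW : ∑ j ∈ W, A v j * (γ - x j) = ∑ j ∈ W, A j v * (γ - b) :=
      sum_congr rfl fun j hj => by rw [hxW j hj, hsym]
    rw [h.sum_univ, hxv, sub_self, mul_zero, zero_add, eU, eW, sum_mul, sum_mul]
  have eU : ∑ i ∈ U, x i * ∑ j, A i j * (x i - x j) = ∑ i ∈ U, A i v * (a * (a - γ)) :=
    sum_congr rfl fun i hi => by rw [hrowU i hi, hxU i hi]; ring
  have eW : ∑ i ∈ W, x i * ∑ j, A i j * (x i - x j) = ∑ i ∈ W, A i v * (b * (b - γ)) :=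
    sum_congr rfl fun i hi => by rw [hrowW i hi, hxW i hi]; ring
  rw [h.sum_univ, hrowv, hxv, eU, eW, ← sum_mul, ← sum_mul]
  ring

theorem sub_lambda2_mul_le (h : IsVertexCut A v U W) (hA : A.IsHermitian)
    (hnn : ∀ i j, 0 ≤ A i j) (hrow : ∀ i, ∑ j, A i j = d) (hdiag : A v v = 0) (hd : 0 < d)
    (hU : U.Nonempty) (hW : W.Nonempty) :
    (d - lambda2 A) * (d * (U.card * W.card)) ≤
      (∑ i ∈ U, A i v) * (∑ i ∈ W, A i v) * (U.card + W.card) := by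
  have hsym : ∀ i j, A i j = A j i := fun i j => by simpa using (hA.apply i j).symm
  set b := ∑ i ∈ U, A i v
  set c := ∑ i ∈ W, A i v
  set s : ℝ := (U.card : ℝ)
  set t : ℝ := (W.card : ℝ)
  have hs : 0 < s := by simp [s, hU.card_pos]
  have ht : 0 < t := by simp [t, hW.card_pos]
  have hb : 0 ≤ b := sum_nonneg fun i _ => hnn i v
  have hc : 0 ≤ c := sum_nonneg fun i _ => hnn i v
  have hbc : b + c = d := h.sum_add_sum_eq hsym hdiag hrow
  have hn : 2 ≤ n := by have := h.card_add_card; have := hU.card_pos; have := hW.card_pos; omega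
  -- `γ` minimises `b (t - γ)² + c (s + γ)²`.
  set γ := (b * t - c * s) / d with hγ
  obtain ⟨x, hxv, hxU, hxW⟩ := h.exists_eq_on_parts γ t (-s)
  have hgap := hA.sub_lambda2_mul_le hn hnn hrow x
  have hval : b * (t - γ) ^ 2 + c * (-s - γ) ^ 2 = b * c * (s + t) ^ 2 / d := by
    have hd0 := hd.ne'
    have h1 : t - γ = c * (s + t) / d := by rw [hγ]; field_simp; linear_combination -t * hbc
    have h2 : -s - γ = -(b * (s + t) / d) := by rw [hγ]; field_simp; linear_combination s * hbc
    rw [h1, h2]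
    field_simp
    linear_combination b * c * hbc
  rw [h.sum_mul_sum_mul_sub_eq hsym hxv hxU hxW, hval] at hgap
  rcases le_or_gt (d - lambda2 A) 0 with hneg | hpos
  · have := mul_nonpos_of_nonpos_of_nonneg hneg (by positivity : 0 ≤ d * (s * t))
    have : 0 ≤ b * c * (s + t) := by positivity
    linarith
  have hnorm := mul_le_mul_of_nonneg_left (h.mul_mul_add_le_dotProduct_self_sub hxv hxU hxW)
    hpos.le
  have key : (d - lambda2 A) * (d * (s * t)) * (s + t) ≤ b * c * (s + t) * (s + t) := by
    have := mul_le_mul_of_nonneg_left (hnorm.trans hgap) hd.le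
    rw [mul_div_cancel₀ _ hd.ne'] at this
    linarith
  exact le_of_mul_le_mul_right key (by positivity)

theorem le_lambda2 (h : IsVertexCut A v U W) (hA : A.IsHermitian) (hnn : ∀ i j, 0 ≤ A i j)
    (hrow : ∀ i, ∑ j, A i j = d) (hdiag : ∀ i, A i i = 0) (hd : 0 < d)
    (hU : U.Nonempty) (hW : W.Nonempty) :
    d - d / 6 - d / (2 * ((n : ℝ) - 3)) ≤ lambda2 A := by
  have hsym : ∀ i j, A i j = A j i := fun i j => by simpa using (hA.apply i j).symm
  have key := h.sub_lambda2_mul_le hA hnn hrow (hdiag v) hd hU hW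
  have hcard : (U.card : ℝ) + W.card + 1 = n := by exact_mod_cast h.card_add_card
  rw [show (n : ℝ) - 3 = U.card + W.card - 2 by linarith]
  by_cases hbc : (∑ i ∈ U, A i v) * (∑ i ∈ W, A i v) = 0
  · rw [hbc, zero_mul] at key
    have := nonpos_of_mul_nonpos_left key (by positivity)
    have : (1 : ℝ) ≤ U.card := by exact_mod_cast hU.card_pos
    have : (1 : ℝ) ≤ W.card := by exact_mod_cast hW.card_pos
    have : 0 ≤ d / (2 * ((U.card : ℝ) + W.card - 2)) := div_nonneg hd.le (by linarith)
    linarith [div_nonneg hd.le (by norm_num : (0 : ℝ) ≤ 6)]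
  obtain ⟨hb, hc⟩ := mul_ne_zero_iff.mp hbc
  have hU2 : U.card ≠ 1 := fun h1 => hc (h.sum_right_eq_zero_of_card_left_eq_one hsym hdiag hrow h1)
  have hW2 : W.card ≠ 1 := fun h1 =>
    hb ((h.symm hsym).sum_right_eq_zero_of_card_left_eq_one hsym hdiag hrow h1)
  have hs : (2 : ℝ) ≤ U.card := by have := hU.card_pos; exact_mod_cast (by omega : 2 ≤ U.card)
  have ht : (2 : ℝ) ≤ W.card := by have := hW.card_pos; exact_mod_cast (by omega : 2 ≤ W.card)
  linarith [sub_le_of_mul_le_mul_add hd (h.sum_add_sum_eq hsym (hdiag v) hrow) hs ht key]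

end IsVertexCut

theorem SimpleGraph.exists_separation_of_not_preconnected_induce {V : Type*} [DecidableEq V]
    {G : SimpleGraph V} {s : Finset V} (h : ¬ (G.induce (s : Set V)).Preconnected) :
    ∃ U W : Finset V, Disjoint U W ∧ U ∪ W = s ∧ U.Nonempty ∧ W.Nonempty ∧
      ∀ i ∈ U, ∀ j ∈ W, ¬ G.Adj i j := by
  classical
  obtain ⟨a, b, hab⟩ : ∃ a b : (s : Set V), ¬ (G.induce (s : Set V)).Reachable a b := by
    simpa [SimpleGraph.Preconnected] using h
  set U := s.filter fun z => ∃ hz : z ∈ s, (G.induce (s : Set V)).Reachable a ⟨z, hz⟩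
  refine ⟨U, s \ U, disjoint_sdiff, union_sdiff_of_subset (filter_subset _ _),
    ⟨a, by simp [U]⟩, ⟨b, by simp [U, hab]⟩, fun i hi j hj hadj => ?_⟩
  simp only [U, mem_filter, mem_sdiff, not_and, not_exists] at hi hj
  obtain ⟨-, his, hai⟩ := hi
  exact hj.2 hj.1 hj.1 (hai.trans (SimpleGraph.Adj.reachable (G := G.induce (s : Set V))
    (u := ⟨i, his⟩) (v := ⟨j, hj.1⟩) hadj))

theorem exists_not_preconnected_of_kappa_le_one {n : ℕ} {A : Matrix (Fin n) (Fin n) ℕ}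
    (hn : 3 ≤ n) (h : kappa A ≤ 1) :
    ∃ S : Finset (Fin n), S.card ≤ 1 ∧
      ¬ ((toSimple A).induce (↑(Sᶜ) : Set (Fin n))).Preconnected := by
  have hne : {k | ∃ S : Finset (Fin n), S.card = k ∧
      (¬ ((toSimple A).induce (↑(Sᶜ) : Set (Fin n))).Connected ∨ (Sᶜ).card = 1)}.Nonempty :=
    ⟨_, {⟨0, by omega⟩}ᶜ, rfl, Or.inr (by simp)⟩
  obtain ⟨S, hS, hdis⟩ := Nat.sInf_mem hne
  have hS1 : S.card ≤ 1 := hS.trans_le h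
  have hSc : 2 ≤ (Sᶜ).card := by rw [card_compl, Fintype.card_fin]; omega
  refine ⟨S, hS1, fun hpre => ?_⟩
  obtain ⟨a, ha⟩ := card_pos.mp (by omega : 0 < (Sᶜ).card)
  exact hdis.elim (· (SimpleGraph.connected_iff _ |>.mpr ⟨hpre, ⟨⟨a, ha⟩⟩⟩)) (by omega)

theorem exists_isVertexCut_of_kappa_le_one {n : ℕ} {A : Matrix (Fin n) (Fin n) ℕ}
    (hn : 3 ≤ n) (h : kappa A ≤ 1) :
    ∃ v U W, IsVertexCut A v U W ∧ U.Nonempty ∧ W.Nonempty := by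
  obtain ⟨S, hS, hpre⟩ := exists_not_preconnected_of_kappa_le_one hn h
  obtain ⟨U, W, hUW, hcov, ⟨a, ha⟩, ⟨b, hb⟩, hadj⟩ :=
    SimpleGraph.exists_separation_of_not_preconnected_induce hpre
  have hSa : a ∉ S := mem_compl.mp (hcov ▸ mem_union_left W ha)
  have hSb : b ∉ S := mem_compl.mp (hcov ▸ mem_union_right U hb)
  obtain ⟨v, hSv, hva, hvb⟩ : ∃ v, S ⊆ {v} ∧ v ≠ a ∧ v ≠ b := by
    rcases Nat.le_one_iff_eq_zero_or_eq_one.mp hS with h0 | h1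
    · obtain ⟨v, hv⟩ : ({a, b}ᶜ : Finset (Fin n)).Nonempty := by
        rw [← card_pos, card_compl, Fintype.card_fin]
        have := card_le_two (a := a) (b := b)
        omega
      simp only [mem_compl, mem_insert, mem_singleton, not_or] at hv
      exact ⟨v, by simp [card_eq_zero.mp h0], hv⟩
    · obtain ⟨w, rfl⟩ := card_eq_one.mp h1
      simp only [mem_singleton] at hSa hSb
      exact ⟨w, subset_rfl, Ne.symm hSa, Ne.symm hSb⟩
  refine ⟨v, U.erase v, W.erase v, ⟨hUW.mono (U.erase_subset v) (W.erase_subset v),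
    U.notMem_erase v, W.notMem_erase v, fun i => ?_, fun i hi j hj => ?_⟩,
    ⟨a, mem_erase.mpr ⟨hva.symm, ha⟩⟩, ⟨b, mem_erase.mpr ⟨hvb.symm, hb⟩⟩⟩
  · by_cases hiv : i = v
    · exact Or.inl hiv
    have : i ∈ U ∪ W := hcov ▸ mem_compl.mpr fun hi => hiv (mem_singleton.mp (hSv hi))
    simp only [mem_union] at this
    simp [hiv, this]
  · have hij : i ≠ j := fun e =>
      disjoint_left.mp hUW (mem_of_mem_erase hi) (e ▸ mem_of_mem_erase hj)
    by_contra hA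
    exact hadj i (mem_of_mem_erase hi) j (mem_of_mem_erase hj)
      ((SimpleGraph.fromRel_adj _ _ _).mpr ⟨hij, Or.inl (Nat.pos_of_ne_zero hA)⟩)

/-- Let G be an n-vertex d-regular multigraph with d ≥ 2 and n ≥ 4.
If λ2(G) < d − d/6 − d/(2(n−3)), then κ(G) ≥ 2. -/
theorem stmt0 {n d : ℕ} (hd : 2 ≤ d) (hn : 4 ≤ n)
    (A : Matrix (Fin n) (Fin n) ℕ)
    (hsym : ∀ i j, A i j = A j i) (hdiag : ∀ i, A i i = 0)
    (hreg : ∀ i, ∑ j, A i j = d)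
    (hlam : lambda2 (A.map (fun x => (x : ℝ))) <
      (d : ℝ) - (d : ℝ) / 6 - (d : ℝ) / (2 * ((n : ℝ) - 3))) :
    2 ≤ kappa A := by
  by_contra! hκ
  obtain ⟨v, U, W, hcut, hU, hW⟩ :=
    exists_isVertexCut_of_kappa_le_one (A := A) (by omega) (by omega)
  set B := A.map (fun x => (x : ℝ))
  have hB : B.IsHermitian := by ext i j; simp [B, hsym i j]
  have hrow : ∀ i, ∑ j, B i j = d := fun i => by simp [B, ← hreg i]
  have hdiagB : ∀ i, B i i = 0 := fun i => by simp [B, hdiag]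
  have hd' : (0 : ℝ) < d := by exact_mod_cast (by omega : 0 < d)
  have := (hcut.map Nat.cast_zero).le_lambda2 hB (fun i j => Nat.cast_nonneg _) hrow hdiagB hd'
    hU hW
  linarith
end

section
/- For every positive integer k, let G be the multigraph on 5 vertices with adjacency matrix [[0, 3k, k, 0, 0], [3k, 0, k, 0, 0], [k, k, 0, k, k], [0, 0, k, 0, 3k], [0, 0, k, 3k, 0]]. Then G is a d-regular multigraph with d = 4k, its vertex-connectivity satisfies κ(G) = 1, and its second-largest eigenvalue satisfies λ2(G) = (3/4)d = ((8·5−25)/(9·5−25))·d. -/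
/-! The multigraph is a bowtie: two triangles `{0,1,2}` and `{2,3,4}` sharing vertex `2`.
Vertex `2` is adjacent to every other vertex, so the graph is connected, while deleting it
separates `{0,1}` from `{3,4}`; hence `κ = 1`. The characteristic polynomial factors as
`(x - 4k)(x - 3k)(x + k)(x + 3k)²`, so the second-largest eigenvalue is `3k = (3/4)·d`. -/

open Matrix Finset BigOperators

open Polynomial

def bowtie {R : Type*} [Semiring R] (k : R) : Matrix (Fin 5) (Fin 5) R :=
  !![0, 3*k, k, 0, 0;
     3*k, 0, k, 0, 0;
     k, k, 0, k, k;
     0, 0, k, 0, 3*k;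
     0, 0, k, 3*k, 0]

theorem bowtie_sum_row {R : Type*} [CommSemiring R] (k : R) (i : Fin 5) :
    ∑ j, bowtie k i j = 4 * k := by
  fin_cases i <;> simp [bowtie, Fin.sum_univ_five] <;> ring

theorem map_bowtie {R S : Type*} [Semiring R] [Semiring S] (f : R →+* S) (k : R) :
    (bowtie k).map f = bowtie (f k) := by
  ext i j
  fin_cases i <;> fin_cases j <;> simp [bowtie, map_ofNat]

theorem charpoly_bowtie {R : Type*} [CommRing R] (k : R) :
    (bowtie k).charpoly =
      (X - C (4 * k)) * (X - C (3 * k)) * (X + C k) * (X + C (3 * k)) ^ 2 := by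
  simp [Matrix.charpoly, Matrix.det_succ_row_zero, Fin.sum_univ_succ, Fin.succAbove, bowtie,
    charmatrix_apply, C_mul, C_ofNat]
  ring

theorem eigList_eq_of_charpoly_eq_prod {n : ℕ} {A : Matrix (Fin n) (Fin n) ℝ} {l : List ℝ}
    (hl : l.Pairwise (· ≤ ·)) (h : A.charpoly = (l.map fun a => X - C a).prod) :
    eigList A = l := by
  have hroots : A.charpoly.roots = l := by
    rw [h, ← Multiset.prod_coe, ← Multiset.map_coe, roots_multiset_prod_X_sub_C]
  rw [eigList, hroots]
  exact List.Perm.eq_of_pairwise' (Multiset.pairwise_sort _ _) hl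
    (Multiset.coe_eq_coe.mp (Multiset.sort_eq _ _))

theorem lambda2_bowtie {k : ℝ} (hk : 0 ≤ k) : lambda2 (bowtie k) = 3 * k := by
  have hsorted : [-(3 * k), -(3 * k), -k, 3 * k, 4 * k].Pairwise (· ≤ ·) := by
    rw [← List.isChain_iff_pairwise]
    simp only [List.isChain_cons_cons, List.isChain_singleton, and_true]
    and_intros <;> linarith
  have hprod : (bowtie k).charpoly =
      ([-(3 * k), -(3 * k), -k, 3 * k, 4 * k].map fun a => X - C a).prod := by
    rw [charpoly_bowtie]
    simp only [List.map_cons, List.map_nil, List.prod_cons, List.prod_nil, map_neg, sub_neg_eq_add]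
    ring
  rw [lambda2, eigList_eq_of_charpoly_eq_prod hsorted hprod]
  rfl

theorem toSimple_adj {n : ℕ} (A : Matrix (Fin n) (Fin n) ℕ) {i j : Fin n} :
    (toSimple A).Adj i j ↔ i ≠ j ∧ (0 < A i j ∨ 0 < A j i) :=
  SimpleGraph.fromRel_adj _ _ _

theorem kappaG_eq_one {n : ℕ} {G : SimpleGraph (Fin n)} (hG : G.Connected) (hn : n ≠ 1)
    (v : Fin n) (hv : ¬ (G.induce (↑(({v} : Finset (Fin n))ᶜ) : Set (Fin n))).Connected) :
    kappaG G = 1 := by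
  have hone : 1 ∈ {k | ∃ S : Finset (Fin n), S.card = k ∧
      (¬ (G.induce (↑(Sᶜ) : Set (Fin n))).Connected ∨ (Sᶜ).card = 1)} :=
    ⟨{v}, Finset.card_singleton v, Or.inl hv⟩
  unfold kappaG
  refine le_antisymm (Nat.sInf_le hone) (Nat.one_le_iff_ne_zero.mpr fun h0 => ?_)
  obtain ⟨S, hS, hS'⟩ := h0 ▸ Nat.sInf_mem ⟨1, hone⟩
  rw [Finset.card_eq_zero.mp hS, Finset.compl_empty, Finset.coe_univ] at hS'
  rcases hS' with hdis | hcard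
  · exact hdis ((SimpleGraph.induceUnivIso G).connected_iff.mpr hG)
  · exact hn (by simpa using hcard)

theorem toSimple_bowtie_connected {k : ℕ} (hk : 0 < k) : (toSimple (bowtie k)).Connected := by
  refine (SimpleGraph.connected_iff_exists_forall_reachable _).mpr ⟨2, fun w => ?_⟩
  rcases eq_or_ne w 2 with rfl | hw
  · rfl
  · refine SimpleGraph.Adj.reachable ((toSimple_adj _).mpr ⟨hw.symm, Or.inl ?_⟩)
    fin_cases w <;> simp_all [bowtie]

theorem not_connected_induce_toSimple_bowtie (k : ℕ) :
    ¬ ((toSimple (bowtie k)).induce (↑(({2} : Finset (Fin 5))ᶜ) : Set (Fin 5))).Connected := by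
  intro hc
  obtain ⟨p⟩ := hc.preconnected ⟨0, by simp⟩ ⟨3, by simp⟩
  obtain ⟨⟨⟨⟨u, hu⟩, ⟨v, hv⟩⟩, hadj⟩, -, hu', hv'⟩ :=
    p.exists_boundary_dart {u | u.1.val < 2} (by simp) (by simp)
  rw [SimpleGraph.induce_adj, toSimple_adj] at hadj
  simp only [Finset.coe_compl, Finset.coe_singleton, Set.mem_compl_iff,
    Set.mem_singleton_iff] at hu hv
  fin_cases u <;> fin_cases v <;> simp_all [bowtie]

/-- for every positive integer k, the given 5-vertex multigraph is
4k-regular, has vertex-connectivity 1, and its second-largest eigenvalue equals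
(3/4)·d = ((8·5−25)/(9·5−25))·d where d = 4k. -/
theorem stmt5 (k : ℕ) (hk : 1 ≤ k)
    (A : Matrix (Fin 5) (Fin 5) ℕ)
    (hA : A = !![0, 3*k, k, 0, 0;
                 3*k, 0, k, 0, 0;
                 k, k, 0, k, k;
                 0, 0, k, 0, 3*k;
                 0, 0, k, 3*k, 0]) :
    (∀ i, ∑ j, A i j = 4 * k) ∧
    kappa A = 1 ∧
    lambda2 (A.map (fun x => (x : ℝ))) = (3 / 4 : ℝ) * ((4 * k : ℕ) : ℝ) ∧
    (3 / 4 : ℝ) * ((4 * k : ℕ) : ℝ) =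
      ((8 * 5 - 25 : ℝ) / (9 * 5 - 25)) * ((4 * k : ℕ) : ℝ) := by
  change A = bowtie k at hA
  subst hA
  refine ⟨bowtie_sum_row k, ?_, ?_, by norm_num⟩
  · show kappaG (toSimple (bowtie k)) = 1
    exact kappaG_eq_one (toSimple_bowtie_connected hk) (by norm_num) 2
      (not_connected_induce_toSimple_bowtie k)
  · have hmap : (bowtie k).map (fun x => (x : ℝ)) = bowtie (k : ℝ) :=
      map_bowtie (Nat.castRingHom ℝ) k
    rw [hmap, lambda2_bowtie (Nat.cast_nonneg k)]
    push_cast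
    ring
end

section
/- Let t be an integer with 2 ≤ t ≤ d−1, and let G be an n-vertex d-regular multigraph with n ≥ t+2, which is not obtained by duplicating edges in a complete graph on at most t+1 vertices. If λ2(G) < d − t/2 − t/(n−2), then κ'(G) ≥ t+1. -/
/-!
If `κ'(G) ≤ t`, a minimum disconnecting edge set contains all `e ≤ t` edges between some vertex
set `S` and its complement. Since `e < d` and a single vertex has `d` boundary edges, both `S`
and `Sᶜ` have at least two vertices. On the span of the indicator vectors of `S` and `Sᶜ` the
Rayleigh quotient of `A` is at least `d - e/|S| - e/|Sᶜ|`; as every vector of a two-dimensional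
subspace can be made orthogonal to a top eigenvector, this bounds `λ₂` from below. Finally
`1/s + 1/(n - s)` is largest at `s = 2` on `2 ≤ s ≤ n - 2`, which gives
`λ₂ ≥ d - t/2 - t/(n - 2)`.
-/

open Matrix Finset BigOperators

lemma sum_mul_sq_lt_mul_sum_sq {ι : Type*} [Fintype ι] {μ y : ι → ℝ} {c : ℝ} (hy : y ≠ 0)
    (h : ∀ i, y i ≠ 0 → μ i < c) : ∑ i, μ i * y i ^ 2 < c * ∑ i, y i ^ 2 := by
  obtain ⟨j, hj⟩ := Function.ne_iff.mp hy
  rw [Finset.mul_sum]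
  refine Finset.sum_lt_sum (fun i _ => ?_) ⟨j, Finset.mem_univ j, ?_⟩
  · rcases eq_or_ne (y i) 0 with hi | hi
    · simp [hi]
    · exact mul_le_mul_of_nonneg_right (h i hi).le (sq_nonneg _)
  · exact mul_lt_mul_of_pos_right (h j hj) (sq_pos_of_ne_zero hj)

lemma div_add_div_le_of_two_le {e t s s' : ℝ} (hs : 2 ≤ s) (hs' : 2 ≤ s') (he : 0 ≤ e)
    (het : e ≤ t) : e / s + e / s' ≤ t / 2 + t / (s + s' - 2) := by
  have hinv : 1 / s + 1 / s' ≤ 1 / 2 + 1 / (s + s' - 2) := by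
    rw [div_add_div _ _ (by positivity) (by positivity),
      div_add_div _ _ (by positivity) (by linarith), div_le_div_iff₀ (by positivity) (by nlinarith)]
    nlinarith [mul_nonneg (sub_nonneg.mpr hs) (sub_nonneg.mpr hs')]
  calc e / s + e / s' = e * (1 / s + 1 / s') := by ring
    _ ≤ t * (1 / 2 + 1 / (s + s' - 2)) := mul_le_mul het hinv (by positivity) (he.trans het)
    _ = t / 2 + t / (s + s' - 2) := by ring

section indicator

variable {ι : Type*} [Fintype ι] [DecidableEq ι]

lemma indicator_dotProduct_mulVec_indicator (R : Matrix ι ι ℝ) (S T : Finset ι) :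
    (fun i => if i ∈ S then (1 : ℝ) else 0) ⬝ᵥ (R *ᵥ fun j => if j ∈ T then 1 else 0) =
      ∑ i ∈ S, ∑ j ∈ T, R i j := by
  simp [dotProduct, mulVec, Finset.sum_ite_mem]

lemma indicator_dotProduct_indicator (S T : Finset ι) :
    (fun i => if i ∈ S then (1 : ℝ) else 0) ⬝ᵥ (fun j => if j ∈ T then 1 else 0) = #(S ∩ T) := by
  simp [dotProduct, ← ite_and, Finset.filter_and, Finset.inter_comm]

end indicator

namespace Matrix.IsHermitian

section eigenbasis

variable {ι : Type*} [Fintype ι] [DecidableEq ι] {M : Matrix ι ι ℝ}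

lemma dotProduct_self_eq_sum_sq (hM : M.IsHermitian) (x : ι → ℝ) :
    x ⬝ᵥ x = ∑ i, (star (hM.eigenvectorUnitary : Matrix ι ι ℝ) *ᵥ x) i ^ 2 := by
  set U : Matrix ι ι ℝ := ↑hM.eigenvectorUnitary
  have hU : U * star U = 1 := Unitary.mul_star_self_of_mem hM.eigenvectorUnitary.2
  calc x ⬝ᵥ x = x ⬝ᵥ (U *ᵥ (star U *ᵥ x)) := by rw [mulVec_mulVec, hU, one_mulVec]
    _ = (star U *ᵥ x) ⬝ᵥ (star U *ᵥ x) := by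
        rw [dotProduct_mulVec, ← mulVec_transpose]; rfl
    _ = _ := by simp [dotProduct, sq]

lemma dotProduct_mulVec_eq_sum_eigenvalues (hM : M.IsHermitian) (x : ι → ℝ) :
    x ⬝ᵥ (M *ᵥ x) =
      ∑ i, hM.eigenvalues i * (star (hM.eigenvectorUnitary : Matrix ι ι ℝ) *ᵥ x) i ^ 2 := by
  set U : Matrix ι ι ℝ := ↑hM.eigenvectorUnitary
  have hM' : M = U * diagonal hM.eigenvalues * star U := by
    conv_lhs => rw [hM.spectral_theorem, Unitary.conjStarAlgAut_apply]
    rfl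
  calc x ⬝ᵥ (M *ᵥ x) = (star U *ᵥ x) ⬝ᵥ (diagonal hM.eigenvalues *ᵥ (star U *ᵥ x)) := by
        conv_lhs => rw [hM']
        rw [← mulVec_mulVec, ← mulVec_mulVec, dotProduct_mulVec, ← mulVec_transpose]; rfl
    _ = _ := by
        simp only [dotProduct, mulVec_diagonal]
        exact Finset.sum_congr rfl fun i _ => by ring

end eigenbasis

variable {n : ℕ} {M : Matrix (Fin n) (Fin n) ℝ}

lemma eigList_eq_reverse_ofFn_eigenvalues₀ (hM : M.IsHermitian) :
    eigList M = (List.ofFn hM.eigenvalues₀).reverse := by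
  refine List.Perm.eq_reverse_of_sortedLE_of_sortedGE ?_
    (Multiset.pairwise_sort _ _).sortedLE (hM.eigenvalues₀_antitone.sortedGE_ofFn)
  rw [← hM.sort_roots_charpoly_eq_eigenvalues₀, eigList]
  simp [← Multiset.coe_eq_coe]

lemma lambda2_eq_eigenvalues₀_one (hM : M.IsHermitian) (hn : 2 ≤ n) :
    lambda2 M = hM.eigenvalues₀ ⟨1, by simp; omega⟩ := by
  rw [lambda2, hM.eigList_eq_reverse_ofFn_eigenvalues₀, List.getD_eq_getElem _ _ (by simp; omega),
    List.getElem_reverse, List.getElem_ofFn]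
  congr
  simp; omega

lemma exists_forall_ne_eigenvalues_lt {c : ℝ} (hM : M.IsHermitian) (hn : 2 ≤ n)
    (hc : lambda2 M < c) : ∃ i₀, ∀ i ≠ i₀, hM.eigenvalues i < c := by
  let e : Fin (Fintype.card (Fin n)) ≃ Fin n := Fintype.equivOfCardEq (Fintype.card_fin _)
  refine ⟨e ⟨0, by simp; omega⟩, fun i hi => ?_⟩
  have h1 : (⟨1, by simp; omega⟩ : Fin (Fintype.card (Fin n))) ≤ e.symm i := by
    rw [Fin.le_def, Nat.one_le_iff_ne_zero]
    exact fun h => hi (by rw [← e.apply_symm_apply i]; congr 1; ext; exact h)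
  rw [hM.lambda2_eq_eigenvalues₀_one hn] at hc
  exact (hM.eigenvalues₀_antitone h1).trans_lt hc

lemma le_lambda2_of_le_dotProduct_mulVec (hM : M.IsHermitian) {u v : Fin n → ℝ} {c : ℝ}
    (huv : LinearIndependent ℝ ![u, v])
    (hq : ∀ x ∈ Submodule.span ℝ {u, v}, c * (x ⬝ᵥ x) ≤ x ⬝ᵥ (M *ᵥ x)) : c ≤ lambda2 M := by
  by_contra! hc
  have hn : 2 ≤ n := by simpa using huv.fintype_card_le_finrank
  obtain ⟨i₀, hi₀⟩ := hM.exists_forall_ne_eigenvalues_lt hn hc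
  set U : Matrix (Fin n) (Fin n) ℝ := ↑hM.eigenvectorUnitary
  -- a nonzero vector of `span {u, v}` whose `i₀`-th eigencoordinate vanishes
  obtain ⟨a, b, hab, hi₀ab⟩ : ∃ a b : ℝ, (a ≠ 0 ∨ b ≠ 0) ∧
      a * (star U *ᵥ u) i₀ + b * (star U *ᵥ v) i₀ = 0 := by
    rcases eq_or_ne ((star U *ᵥ v) i₀) 0 with hv | hv
    · exact ⟨0, 1, Or.inr one_ne_zero, by simp [hv]⟩
    · exact ⟨(star U *ᵥ v) i₀, -(star U *ᵥ u) i₀, Or.inl hv, by ring⟩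
  set x := a • u + b • v
  have hx : x ≠ 0 := fun h => by
    have := LinearIndependent.pair_iff.mp huv a b h
    tauto
  have hy : star U *ᵥ x ≠ 0 := fun h => hx <| by
    rw [← one_mulVec x, ← Unitary.mul_star_self_of_mem hM.eigenvectorUnitary.2, ← mulVec_mulVec,
      h, mulVec_zero]
  have hyi₀ : (star U *ᵥ x) i₀ = 0 := by
    simpa [x, mulVec_add, mulVec_smul] using hi₀ab
  have hlt := sum_mul_sq_lt_mul_sum_sq hy fun i hi => hi₀ i (by rintro rfl; exact hi hyi₀)
  rw [← hM.dotProduct_mulVec_eq_sum_eigenvalues, ← hM.dotProduct_self_eq_sum_sq] at hlt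
  exact (hq x (Submodule.mem_span_pair.mpr ⟨a, b, rfl⟩)).not_gt hlt

end Matrix.IsHermitian

section cut

variable {n d : ℕ} {A : Matrix (Fin n) (Fin n) ℕ}

def cutSize (A : Matrix (Fin n) (Fin n) ℕ) (S : Finset (Fin n)) : ℕ :=
  ∑ i ∈ S, ∑ j ∈ Sᶜ, A i j

lemma cutSize_compl (hsym : ∀ i j, A i j = A j i) (S : Finset (Fin n)) :
    cutSize A Sᶜ = cutSize A S := by
  rw [cutSize, cutSize, compl_compl, Finset.sum_comm (f := A)]
  exact Finset.sum_congr rfl fun i _ => Finset.sum_congr rfl fun j _ => hsym j i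

lemma cutSize_add_cutSize_compl_le (B : Matrix (Fin n) (Fin n) ℕ) (S : Finset (Fin n)) :
    cutSize B S + cutSize B Sᶜ ≤ ∑ i, ∑ j, B i j := by
  rw [← Finset.sum_add_sum_compl S]
  exact add_le_add
    (Finset.sum_le_sum fun i _ => Finset.sum_le_sum_of_subset (Finset.subset_univ _))
    (Finset.sum_le_sum fun i _ => Finset.sum_le_sum_of_subset (Finset.subset_univ _))

lemma sum_sum_add_cutSize (hreg : ∀ i, ∑ j, A i j = d) (S : Finset (Fin n)) :
    ∑ i ∈ S, ∑ j ∈ S, A i j + cutSize A S = #S * d := by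
  simp [cutSize, ← Finset.sum_add_distrib, Finset.sum_add_sum_compl, hreg]

lemma cutSize_singleton (hdiag : ∀ i, A i i = 0) (hreg : ∀ i, ∑ j, A i j = d) (v : Fin n) :
    cutSize A {v} = d := by
  simpa [hdiag] using sum_sum_add_cutSize hreg {v}

lemma two_le_card_of_cutSize_lt (hdiag : ∀ i, A i i = 0) (hreg : ∀ i, ∑ j, A i j = d)
    {S : Finset (Fin n)} (hS : S.Nonempty) (h : cutSize A S < d) : 2 ≤ #S := by
  by_contra! h2
  obtain ⟨v, rfl⟩ := Finset.card_eq_one.mp (show #S = 1 by have := hS.card_pos; omega)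
  exact (cutSize_singleton hdiag hreg v).not_lt h

lemma exists_disconnecting_of_cut (hsym : ∀ i j, A i j = A j i) {S : Finset (Fin n)}
    (hS : S.Nonempty) (hSc : Sᶜ.Nonempty) :
    ∃ B : Matrix (Fin n) (Fin n) ℕ, (∀ i j, B i j ≤ A i j) ∧ (∀ i j, B i j = B j i) ∧
      ∑ i, ∑ j, B i j = 2 * cutSize A S ∧ ¬ (toSimple (A - B)).Connected := by
  set B : Matrix (Fin n) (Fin n) ℕ := Matrix.of fun i j => if (i ∈ S ↔ j ∈ S) then 0 else A i j
  refine ⟨B, fun i j => ?_, fun i j => ?_, ?_, fun hconn => ?_⟩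
  · simp only [B, of_apply]
    split_ifs <;> omega
  · simp only [B, of_apply, iff_comm (a := i ∈ S), hsym i j]
  · rw [two_mul, ← Finset.sum_add_sum_compl S]
    congr 1
    · refine Finset.sum_congr rfl fun i hi => ?_
      simp [B, hi, Finset.sum_ite, Finset.filter_notMem_eq_sdiff, Finset.compl_eq_univ_sdiff]
    · rw [← cutSize_compl hsym]
      refine Finset.sum_congr rfl fun i hi => ?_
      rw [Finset.mem_compl] at hi
      simp [B, hi]
  · obtain ⟨u, hu⟩ := hS
    obtain ⟨w, hw⟩ := hSc
    obtain ⟨p⟩ := hconn.preconnected u w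
    obtain ⟨dart, -, hdart₁, hdart₂⟩ := p.exists_boundary_dart S hu (by simpa using hw)
    rw [Finset.mem_coe] at hdart₁ hdart₂
    have hadj := dart.adj
    simp [toSimple, B, hdart₁, hdart₂] at hadj

lemma exists_cutSize_le_of_not_connected [NeZero n] {B : Matrix (Fin n) (Fin n) ℕ} {k : ℕ}
    (hBA : ∀ i j, B i j ≤ A i j) (hBsym : ∀ i j, B i j = B j i)
    (hBsum : ∑ i, ∑ j, B i j = 2 * k) (hdisc : ¬ (toSimple (A - B)).Connected) :
    ∃ S : Finset (Fin n), S.Nonempty ∧ Sᶜ.Nonempty ∧ cutSize A S ≤ k := by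
  classical
  obtain ⟨u, w, huw⟩ : ∃ u w, ¬ (toSimple (A - B)).Reachable u w := by
    by_contra! h
    exact hdisc ⟨h⟩
  set S : Finset (Fin n) := {z | (toSimple (A - B)).Reachable u z}
  refine ⟨S, ⟨u, by simp [S]⟩, ⟨w, by simp [S, huw]⟩, ?_⟩
  have hcross : cutSize A S = cutSize B S := by
    refine Finset.sum_congr rfl fun i hi => Finset.sum_congr rfl fun j hj => ?_
    refine le_antisymm (not_lt.mp fun hlt => ?_) (hBA i j)
    simp only [S, Finset.mem_compl, Finset.mem_filter_univ] at hi hj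
    refine hj (hi.trans (SimpleGraph.Adj.reachable ?_))
    simp only [toSimple, SimpleGraph.fromRel_adj, Matrix.sub_apply]
    exact ⟨by rintro rfl; exact hj hi, Or.inl (by omega)⟩
  have := cutSize_add_cutSize_compl_le B S
  rw [cutSize_compl hBsym] at this
  omega

lemma exists_cutSize_le_edgeConn (hsym : ∀ i j, A i j = A j i) (hn : 2 ≤ n) :
    ∃ S : Finset (Fin n), S.Nonempty ∧ Sᶜ.Nonempty ∧ cutSize A S ≤ edgeConn A := by
  have : NeZero n := ⟨by omega⟩
  have hstar : ({0}ᶜ : Finset (Fin n)).Nonempty := ⟨⟨1, by omega⟩, by simp [Fin.ext_iff]⟩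
  obtain ⟨B, hBA, hBsym, hBsum, hdisc⟩ : edgeConn A ∈ _ :=
    Nat.sInf_mem ⟨_, exists_disconnecting_of_cut hsym (Finset.singleton_nonempty 0) hstar⟩
  exact exists_cutSize_le_of_not_connected hBA hBsym hBsum hdisc

lemma le_lambda2_of_cut (hsym : ∀ i j, A i j = A j i) (hreg : ∀ i, ∑ j, A i j = d)
    {S : Finset (Fin n)} (hS : S.Nonempty) (hSc : Sᶜ.Nonempty) :
    (d : ℝ) - cutSize A S / #S - cutSize A S / #Sᶜ ≤ lambda2 (A.map (fun x => (x : ℝ))) := by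
  set M := A.map (fun x => (x : ℝ))
  have hM : M.IsHermitian := by ext i j; simp [M, hsym j i]
  have hblock (T T' : Finset (Fin n)) :
      ∑ i ∈ T, ∑ j ∈ T', M i j = ((∑ i ∈ T, ∑ j ∈ T', A i j : ℕ) : ℝ) := by
    push_cast; rfl
  set u : Fin n → ℝ := fun i => if i ∈ S then 1 else 0
  set v : Fin n → ℝ := fun i => if i ∈ Sᶜ then 1 else 0
  have huv : LinearIndependent ℝ ![u, v] := LinearIndependent.pair_iff.mpr fun a b h => by
    obtain ⟨p, hp⟩ := hS
    obtain ⟨q, hq⟩ := hSc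
    have h1 := congrFun h p
    have h2 := congrFun h q
    simp_all [u, v]
  refine hM.le_lambda2_of_le_dotProduct_mulVec huv fun x hx => ?_
  obtain ⟨a, b, rfl⟩ := Submodule.mem_span_pair.mp hx
  simp only [u, v, add_dotProduct, dotProduct_add, mulVec_add, mulVec_smul, smul_dotProduct,
    dotProduct_smul, indicator_dotProduct_mulVec_indicator, indicator_dotProduct_indicator,
    smul_eq_mul, hblock]
  have hSS : ((∑ i ∈ S, ∑ j ∈ S, A i j : ℕ) : ℝ) = #S * d - cutSize A S := by
    rw [eq_sub_iff_add_eq]; exact_mod_cast sum_sum_add_cutSize hreg S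
  have hScSc : ((∑ i ∈ Sᶜ, ∑ j ∈ Sᶜ, A i j : ℕ) : ℝ) = #Sᶜ * d - cutSize A S := by
    rw [eq_sub_iff_add_eq, ← cutSize_compl hsym]; exact_mod_cast sum_sum_add_cutSize hreg Sᶜ
  have hSSc : ∑ i ∈ S, ∑ j ∈ Sᶜ, A i j = cutSize A S := rfl
  have hScS : ∑ i ∈ Sᶜ, ∑ j ∈ S, A i j = cutSize A S := by
    rw [← cutSize_compl hsym, cutSize, compl_compl]
  rw [hSS, hScSc, hSSc, hScS, Finset.inter_comm Sᶜ S]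
  simp only [Finset.inter_self, Finset.inter_compl, Finset.card_empty, Nat.cast_zero, mul_zero,
    add_zero, zero_add]
  have hs : (0 : ℝ) < #S := by exact_mod_cast hS.card_pos
  have hs' : (0 : ℝ) < #Sᶜ := by exact_mod_cast hSc.card_pos
  rw [← sub_nonneg]
  calc (0 : ℝ) ≤ cutSize A S * (a * #S + b * #Sᶜ) ^ 2 / (#S * #Sᶜ) := by positivity
    _ = _ := by field_simp; ring

end cut

theorem stmt7_general {n d t : ℕ} (ht : 2 ≤ t) (htd : t ≤ d - 1) (hn : t + 2 ≤ n)
    (A : Matrix (Fin n) (Fin n) ℕ)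
    (hsym : ∀ i j, A i j = A j i) (hdiag : ∀ i, A i i = 0)
    (hreg : ∀ i, ∑ j, A i j = d)
    (hlam : lambda2 (A.map (fun x => (x : ℝ))) <
      (d : ℝ) - (t : ℝ) / 2 - (t : ℝ) / ((n : ℝ) - 2)) :
    t + 1 ≤ edgeConn A := by
  obtain ⟨S, hS, hSc, hcut⟩ := exists_cutSize_le_edgeConn hsym (by omega)
  by_contra! hκ
  have hcut_t : cutSize A S ≤ t := by omega
  have hcard : 2 ≤ #S := two_le_card_of_cutSize_lt hdiag hreg hS (by omega)
  have hcard' : 2 ≤ #Sᶜ :=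
    two_le_card_of_cutSize_lt hdiag hreg hSc (by rw [cutSize_compl hsym]; omega)
  have hn' : (n : ℝ) = #S + #Sᶜ := by
    rw [← Nat.cast_add, Finset.card_add_card_compl, Fintype.card_fin]
  have hratio := div_add_div_le_of_two_le (s := #S) (s' := #Sᶜ) (e := cutSize A S) (t := t)
    (by exact_mod_cast hcard) (by exact_mod_cast hcard') (Nat.cast_nonneg _)
    (by exact_mod_cast hcut_t)
  have hlower := le_lambda2_of_cut hsym hreg hS hSc
  rw [hn'] at hlam
  linarith

/-- Let 2 ≤ t ≤ d−1 and let G be an n-vertex d-regular multigraph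
with n ≥ t+2 which is not obtained by duplicating edges in a complete graph on
at most t+1 vertices.  If λ2(G) < d − t/2 − t/(n−2), then κ'(G) ≥ t+1. -/
theorem stmt7 {n d t : ℕ} (ht : 2 ≤ t) (htd : t ≤ d - 1) (hn : t + 2 ≤ n)
    (A : Matrix (Fin n) (Fin n) ℕ)
    (hsym : ∀ i j, A i j = A j i) (hdiag : ∀ i, A i i = 0)
    (hreg : ∀ i, ∑ j, A i j = d)
    (hnotK : ¬ (n ≤ t + 1 ∧ toSimple A = ⊤))
    (hlam : lambda2 (A.map (fun x => (x : ℝ))) <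
      (d : ℝ) - (t : ℝ) / 2 - (t : ℝ) / ((n : ℝ) - 2)) :
    t + 1 ≤ edgeConn A :=
  stmt7_general ht htd hn A hsym hdiag hreg hlam
end

section
/- For all integers d ≥ 3 and n ≥ 14, the second-largest eigenvalue ρ(d,n) of the matrix Q(d,n) satisfies ρ(d,n) > d − 1/3 − 1/(n−3). -/
open Matrix Finset BigOperators

/-!
Every row of `Q(d,n)` sums to `d`, so `d` is an eigenvalue and `2(n-4)` times the characteristic
polynomial factors as `(x - d) · C(x)` with a cubic `C` satisfying `C(d) = n (d-1)² > 0`.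
With `t = d - 1/3 - 1/(n-3)`, the signs `C(-d) < 0 < C(-d/4)` and `C(t) < 0 < C(d)` give roots
`r₁ < r₂ < t < r₃ < d` of `C`, so the spectrum is `r₁ < r₂ < r₃ < d` and `ρ(d,n) = r₃ > t`.
Each sign is seen by writing `d = 3 + a`, `n = 14 + b` with `a, b ≥ 0`: the resulting polynomial
in `a, b` has coefficients of a single sign.
-/

open Polynomial
open scoped NNReal

theorem Polynomial.roots_sort_eq_of_sortedLT {R : Type*} [CommRing R] [IsDomain R] [LinearOrder R]
    {p : R[X]} (hp : p ≠ 0) {l : List R} (hl : l.SortedLT) (hlen : p.natDegree ≤ l.length)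
    (hroots : ∀ x ∈ l, p.IsRoot x) : p.roots.sort (· ≤ ·) = l := by
  have hle : (l : Multiset R) ≤ p.roots := by
    rw [Multiset.le_iff_subset (Multiset.coe_nodup.mpr hl.nodup)]
    exact fun x hx => (mem_roots hp).mpr (hroots x hx)
  have heq : (l : Multiset R) = p.roots :=
    Multiset.eq_of_le_of_card_le hle ((card_roots' p).trans (by simpa using hlen))
  rw [← heq, Multiset.coe_sort]
  exact List.mergeSort_eq_self _ hl.sortedLE.pairwise

theorem eigList_eq_of_sortedLT {k : ℕ} (A : Matrix (Fin k) (Fin k) ℝ) {l : List ℝ}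
    (hl : l.SortedLT) (hlen : l.length = k) (hroots : ∀ x ∈ l, A.charpoly.IsRoot x) :
    eigList A = l :=
  roots_sort_eq_of_sortedLT A.charpoly_monic.ne_zero hl
    (by rw [charpoly_natDegree_eq_dim, Fintype.card_fin, hlen]) hroots

def Qcubic (d n x : ℝ) : ℝ :=
  (n - 4) * (2 * x ^ 3 - (d + 1) * x ^ 2 - (d ^ 2 - 2 * d + 3) * x + (d + 1)) +
    (d - 1) * (2 * x ^ 2 - (d - 1) * x - (d ^ 2 - 3 * d + 4))

theorem Qmat_charpoly_eval (d n x : ℝ) (hn : n ≠ 4) :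
    2 * (n - 4) * (Qmat d n).charpoly.eval x = (x - d) * Qcubic d n x := by
  rw [eval_charpoly, Matrix.det_succ_row_zero]
  simp only [Fin.sum_univ_succ, det_fin_three, Qmat, Fin.succAbove, submatrix_apply,
    Matrix.sub_apply, scalar_apply, diagonal_apply, of_apply, Matrix.cons_val, Fin.reduceSucc,
    Fin.reduceCastSucc, Fin.reduceLT, Fin.reduceEq, Fin.val_succ, Fin.val_zero, if_true, if_false,
    Qcubic]
  field_simp
  ring

theorem Qmat_charpoly_isRoot_iff {d n x : ℝ} (hn : n ≠ 4) :
    (Qmat d n).charpoly.IsRoot x ↔ x = d ∨ Qcubic d n x = 0 := by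
  have h2 : 2 * (n - 4) ≠ 0 := mul_ne_zero two_ne_zero (sub_ne_zero.mpr hn)
  rw [IsRoot.def, ← mul_right_inj' h2, Qmat_charpoly_eval d n x hn, mul_zero, mul_eq_zero,
    sub_eq_zero]

theorem continuous_Qcubic (d n : ℝ) : Continuous (Qcubic d n) := by
  unfold Qcubic; fun_prop

theorem Qcubic_self (d n : ℝ) : Qcubic d n d = n * (d - 1) ^ 2 := by
  unfold Qcubic; ring

theorem NNReal.exists_eq_add_of_le {a x : ℝ} (h : a ≤ x) : ∃ c : ℝ≥0, x = c + a :=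
  ⟨(x - a).toNNReal, by rw [Real.coe_toNNReal _ (sub_nonneg.mpr h)]; ring⟩

theorem Qcubic_neg_self_lt_zero {d n : ℝ} (hd : 3 ≤ d) (hn : 14 ≤ n) : Qcubic d n (-d) < 0 := by
  obtain ⟨a, rfl⟩ := NNReal.exists_eq_add_of_le hd
  obtain ⟨b, rfl⟩ := NNReal.exists_eq_add_of_le hn
  have h : Qcubic (a + 3) (b + 14) (-(a + 3)) = -(640 + 68 * b + 632 * a + 68 * a * b +
      192 * a ^ 2 + 21 * a ^ 2 * b + 18 * a ^ 3 + 2 * a ^ 3 * b) := by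
    unfold Qcubic; ring
  rw [h, neg_lt_zero]
  positivity

theorem Qcubic_neg_div_four_pos {d n : ℝ} (hd : 3 ≤ d) (hn : 14 ≤ n) :
    0 < Qcubic d n (-(d / 4)) := by
  obtain ⟨a, rfl⟩ := NNReal.exists_eq_add_of_le hd
  obtain ⟨b, rfl⟩ := NNReal.exists_eq_add_of_le hn
  have h : Qcubic (a + 3) (b + 14) (-((a + 3) / 4)) = (3284 + 346 * b + 1444 * a +
      166 * a * b + 396 * a ^ 2 + 54 * a ^ 2 * b + 60 * a ^ 3 + 10 * a ^ 3 * b) / 64 := by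
    unfold Qcubic; ring
  rw [h]
  positivity

theorem Qcubic_sub_third_sub_inv_lt_zero {d n : ℝ} (hd : 3 ≤ d) (hn : 14 ≤ n) :
    Qcubic d n (d - 1 / 3 - 1 / (n - 3)) < 0 := by
  obtain ⟨a, rfl⟩ := NNReal.exists_eq_add_of_le hd
  obtain ⟨b, rfl⟩ := NNReal.exists_eq_add_of_le hn
  have h : Qcubic (a + 3) (b + 14) (a + 3 - 1 / 3 - 1 / (b + 14 - 3)) =
      -(1074976 + 386128 * b + 51804 * b ^ 2 + 3074 * b ^ 3 + 68 * b ^ 4 + 639408 * a +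
        227616 * a * b + 30258 * a * b ^ 2 + 1779 * a * b ^ 3 + 39 * a * b ^ 4) /
      (27 * (b + 11) ^ 3) := by
    rw [show (b : ℝ) + 14 - 3 = b + 11 by ring]
    unfold Qcubic
    field_simp
    ring
  rw [h, neg_div, neg_lt_zero]
  positivity

/-- for all integers d ≥ 3 and n ≥ 14,
ρ(d,n) > d − 1/3 − 1/(n−3). -/
theorem stmt9 (d n : ℤ) (hd : 3 ≤ d) (hn : 14 ≤ n) :
    rho (d : ℝ) (n : ℝ) > (d : ℝ) - 1 / 3 - 1 / ((n : ℝ) - 3) := by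
  have hd' : (3 : ℝ) ≤ d := by exact_mod_cast hd
  have hn' : (14 : ℝ) ≤ n := by exact_mod_cast hn
  set t : ℝ := d - 1 / 3 - 1 / ((n : ℝ) - 3) with ht_def
  have ht : -((d : ℝ) / 4) < t ∧ t < d := by
    have hinv_pos : 0 < 1 / ((n : ℝ) - 3) := by apply div_pos <;> linarith
    have hinv_le : 1 / ((n : ℝ) - 3) ≤ 1 := by rw [div_le_one] <;> linarith
    constructor <;> linarith [ht_def]
  have hcont {s : Set ℝ} : ContinuousOn (Qcubic d n) s := (continuous_Qcubic d n).continuousOn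
  obtain ⟨r₁, hr₁, hr₁_root⟩ := intermediate_value_Ioo (by linarith) hcont
    ⟨Qcubic_neg_self_lt_zero hd' hn', Qcubic_neg_div_four_pos hd' hn'⟩
  obtain ⟨r₂, hr₂, hr₂_root⟩ := intermediate_value_Ioo' ht.1.le hcont
    ⟨Qcubic_sub_third_sub_inv_lt_zero hd' hn', Qcubic_neg_div_four_pos hd' hn'⟩
  obtain ⟨r₃, hr₃, hr₃_root⟩ := intermediate_value_Ioo ht.2.le hcont
    ⟨Qcubic_sub_third_sub_inv_lt_zero hd' hn',
      by rw [Qcubic_self]; exact mul_pos (by linarith) (pow_pos (by linarith) 2)⟩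
  have hn4 : (n : ℝ) ≠ 4 := by linarith
  have heig : eigList (Qmat d n) = [r₁, r₂, r₃, d] := by
    refine eigList_eq_of_sortedLT _ ?_ rfl ?_
    · rw [List.sortedLT_iff_isChain]
      simp only [List.isChain_cons_cons, List.isChain_singleton, and_true]
      exact ⟨hr₁.2.trans hr₂.1, hr₂.2.trans hr₃.1, hr₃.2⟩
    · simp only [List.mem_cons, List.not_mem_nil, or_false, Qmat_charpoly_isRoot_iff hn4]
      rintro x (rfl | rfl | rfl | rfl)
      exacts [Or.inr hr₁_root, Or.inr hr₂_root, Or.inr hr₃_root, Or.inl rfl]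
  rw [gt_iff_lt, rho, lambda2, heig]
  exact hr₃.1
end

section
/- Let G be an n-vertex d-regular multigraph and let S be a nonempty proper subset of its vertex set. If p denotes the number of edges of G (counted with multiplicity) having one endpoint in S and the other endpoint outside S, then λ2(G) ≥ d − p/|S| − p/(n−|S|). -/
open Matrix Finset BigOperators

/-! The all-ones vector is an eigenvector of `A` for the eigenvalue `d`. The cut vector, equal to
`|Sᶜ|` on `S` and to `-|S|` on `Sᶜ`, is orthogonal to it, and the identity
`xᵀAx = d‖x‖² - ½ ∑ᵢⱼ Aᵢⱼ (xᵢ - xⱼ)²` shows that its Rayleigh quotient is exactly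
`d - p/|S| - p/|Sᶜ|`, which is at most `d`. Expanding in an orthonormal eigenbasis, an eigenvector
and an orthogonal vector whose Rayleigh quotients are both at least `R` force two eigenvalues,
counted with multiplicity, to be at least `R`. -/

theorem List.le_getD_length_sub_two {α : Type*} [LinearOrder α] {l : List α}
    (hl : l.Pairwise (· ≤ ·)) {R : α} (h : 2 ≤ l.countP (R ≤ ·)) (d : α) :
    R ≤ l.getD (l.length - 2) d := by
  induction l with
  | nil => simp at h
  | cons a t ih =>
    have hlen : 2 ≤ (a :: t).length := h.trans List.countP_le_length
    by_cases ha : R ≤ a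
    · have hidx : (a :: t).length - 2 < (a :: t).length := by omega
      rw [List.getD_eq_getElem _ _ hidx]
      rcases List.mem_cons.mp (List.getElem_mem hidx) with h | h
      · rw [h]; exact ha
      · exact ha.trans (List.rel_of_pairwise_cons hl h)
    · rw [List.countP_cons_of_neg (by simpa using ha)] at h
      have ht : 2 ≤ t.length := h.trans List.countP_le_length
      rw [List.length_cons, show t.length + 1 - 2 = t.length - 2 + 1 by omega,
        List.getD_cons_succ]
      exact ih hl.of_cons h

theorem Fintype.sum_apply_ite_mem {ι α β : Type*} [Fintype ι] [DecidableEq ι] [AddCommMonoid β]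
    (S : Finset ι) (a b : α) (f : α → β) :
    ∑ i, f (if i ∈ S then a else b) = #S • f a + #Sᶜ • f b := by
  rw [← sum_add_sum_compl S]
  congr 1
  · rw [← Finset.sum_const]
    exact Finset.sum_congr rfl fun i hi => by rw [if_pos hi]
  · rw [← Finset.sum_const]
    exact Finset.sum_congr rfl fun i hi => by rw [if_neg (Finset.mem_compl.mp hi)]

theorem le_lambda2_of_le_eigenvalues {m : ℕ} {M : Matrix (Fin m) (Fin m) ℝ}
    (hM : M.IsHermitian) {R : ℝ} {k₀ k₁ : Fin m} (hk : k₀ ≠ k₁)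
    (h₀ : R ≤ hM.eigenvalues k₀) (h₁ : R ≤ hM.eigenvalues k₁) : R ≤ lambda2 M := by
  have hroots : ((eigList M : List ℝ) : Multiset ℝ) = univ.val.map hM.eigenvalues := by
    simpa [eigList] using hM.roots_charpoly_eq_eigenvalues
  have hlen : (eigList M).length = m := by
    simpa using congrArg Multiset.card hroots
  have hcount : 2 ≤ (eigList M).countP (R ≤ ·) := by
    have hsub : ({k₀, k₁} : Finset (Fin m)) ⊆ univ.filter (R ≤ hM.eigenvalues ·) := by
      simp [Finset.insert_subset_iff, h₀, h₁]
    calc 2 = ({k₀, k₁} : Finset (Fin m)).card := (card_pair hk).symm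
      _ ≤ (univ.filter (R ≤ hM.eigenvalues ·)).card := card_le_card hsub
      _ = (eigList M).countP (R ≤ ·) := by
        rw [← Multiset.coe_countP, hroots, Multiset.countP_map]
        rfl
  have := List.le_getD_length_sub_two (l := eigList M) (Multiset.pairwise_sort _ _) hcount 0
  rwa [hlen] at this

namespace Matrix.IsHermitian

variable {ι : Type*} [Fintype ι] [DecidableEq ι] {M : Matrix ι ι ℝ} (hM : M.IsHermitian)

theorem sum_eigenvectorBasis_dotProduct_mul (u w : ι → ℝ) :
    ∑ k, (⇑(hM.eigenvectorBasis k) ⬝ᵥ u) * (⇑(hM.eigenvectorBasis k) ⬝ᵥ w) = u ⬝ᵥ w := by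
  have := hM.eigenvectorBasis.sum_inner_mul_inner (WithLp.toLp 2 u) (WithLp.toLp 2 w)
  simp only [EuclideanSpace.inner_eq_star_dotProduct, star_trivial] at this
  simpa [dotProduct_comm w] using this

theorem eigenvectorBasis_dotProduct_mulVec_s11 (k : ι) (w : ι → ℝ) :
    ⇑(hM.eigenvectorBasis k) ⬝ᵥ (M *ᵥ w) =
      hM.eigenvalues k * (⇑(hM.eigenvectorBasis k) ⬝ᵥ w) := by
  rw [dotProduct_mulVec, ← mulVec_transpose, (isHermitian_iff_isSymm.mp hM).eq,
    mulVec_eigenvectorBasis, smul_dotProduct, smul_eq_mul]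

theorem sum_eigenvalues_mul_sq (x : ι → ℝ) :
    ∑ k, hM.eigenvalues k * (⇑(hM.eigenvectorBasis k) ⬝ᵥ x) ^ 2 = x ⬝ᵥ (M *ᵥ x) := by
  rw [← hM.sum_eigenvectorBasis_dotProduct_mul]
  refine Finset.sum_congr rfl fun k _ => ?_
  rw [hM.eigenvectorBasis_dotProduct_mulVec_s11]
  ring

theorem exists_ne_le_eigenvalues {v x : ι → ℝ} {μ R : ℝ} (hv : M *ᵥ v = μ • v) (hv0 : v ≠ 0)
    (hx0 : x ≠ 0) (hxv : x ⬝ᵥ v = 0) (hRμ : R ≤ μ) (hR : R * (x ⬝ᵥ x) ≤ x ⬝ᵥ (M *ᵥ x)) :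
    ∃ k₀ k₁, k₀ ≠ k₁ ∧ R ≤ hM.eigenvalues k₀ ∧ R ≤ hM.eigenvalues k₁ := by
  set c : ι → ℝ := fun k => ⇑(hM.eigenvectorBasis k) ⬝ᵥ x
  set e : ι → ℝ := fun k => ⇑(hM.eigenvectorBasis k) ⬝ᵥ v
  have he : ∀ k, hM.eigenvalues k * e k = μ * e k := fun k => by
    rw [← hM.eigenvectorBasis_dotProduct_mulVec_s11, hv, dotProduct_smul, smul_eq_mul]
  obtain ⟨k₀, hk₀⟩ : ∃ k, e k ≠ 0 := by
    by_contra! h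
    apply hv0
    rw [← dotProduct_self_eq_zero, ← hM.sum_eigenvectorBasis_dotProduct_mul]
    simp [e, h]
  have hμ : hM.eigenvalues k₀ = μ := mul_right_cancel₀ hk₀ (he k₀)
  by_contra! hne
  have hlt : ∀ k ≠ k₀, hM.eigenvalues k < R := fun k hk => hne k₀ k hk.symm (hμ ▸ hRμ)
  have he' : ∀ k ≠ k₀, e k = 0 := fun k hk => by
    by_contra h
    linarith [hlt k hk, mul_right_cancel₀ h (he k)]
  -- in the eigenbasis `v` is supported on `k₀`, so `x ⊥ v` kills the `k₀`-coordinate of `x`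
  have hc₀ : c k₀ = 0 := by
    have h := hM.sum_eigenvectorBasis_dotProduct_mul x v
    rw [Finset.sum_eq_single k₀ (fun k _ hk => by simp [e, he' k hk]) (by simp), hxv] at h
    exact (mul_eq_zero.mp h).resolve_right hk₀
  obtain ⟨k₁, hk₁⟩ : ∃ k, c k ≠ 0 := by
    by_contra! h
    apply hx0
    rw [← dotProduct_self_eq_zero, ← hM.sum_eigenvectorBasis_dotProduct_mul]
    simp [c, h]
  have hk₁₀ : k₁ ≠ k₀ := fun h => hk₁ (h ▸ hc₀)
  have hterm : ∀ k, hM.eigenvalues k * c k ^ 2 ≤ R * c k ^ 2 := fun k => by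
    rcases eq_or_ne k k₀ with rfl | hk
    · simp [hc₀]
    · exact mul_le_mul_of_nonneg_right (hlt k hk).le (sq_nonneg _)
  have : x ⬝ᵥ (M *ᵥ x) < R * (x ⬝ᵥ x) := calc
    x ⬝ᵥ (M *ᵥ x) = ∑ k, hM.eigenvalues k * c k ^ 2 := (hM.sum_eigenvalues_mul_sq x).symm
    _ < ∑ k, R * c k ^ 2 := Finset.sum_lt_sum (fun k _ => hterm k)
      ⟨k₁, Finset.mem_univ _, mul_lt_mul_of_pos_right (hlt k₁ hk₁₀) (by positivity)⟩
    _ = R * (x ⬝ᵥ x) := by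
      rw [← hM.sum_eigenvectorBasis_dotProduct_mul, Finset.mul_sum]
      simp only [c, sq]
  linarith

end Matrix.IsHermitian

namespace Matrix.IsSymm

variable {ι : Type*} [Fintype ι] {M : Matrix ι ι ℝ}

theorem dotProduct_mulVec_eq_of_sum_row (hM : M.IsSymm) {d : ℝ} (hrow : ∀ i, ∑ j, M i j = d)
    (x : ι → ℝ) :
    x ⬝ᵥ (M *ᵥ x) = d * (x ⬝ᵥ x) - (∑ i, ∑ j, M i j * (x i - x j) ^ 2) / 2 := by
  have hcol : ∀ j, ∑ i, M i j = d := fun j => by simp_rw [hM.apply j]; exact hrow j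
  have hleft : ∑ i, ∑ j, M i j * x i ^ 2 = d * (x ⬝ᵥ x) := by
    simp_rw [← sum_mul, hrow, ← mul_sum, dotProduct, sq]
  have hright : ∑ i, ∑ j, M i j * x j ^ 2 = d * (x ⬝ᵥ x) := by
    rw [Finset.sum_comm]; simp_rw [← sum_mul, hcol, ← mul_sum, dotProduct, sq]
  have hmid : ∑ i, ∑ j, M i j * (x i * x j) = x ⬝ᵥ (M *ᵥ x) := by
    simp_rw [dotProduct, mulVec, dotProduct, mul_sum]
    exact sum_congr rfl fun i _ => sum_congr rfl fun j _ => by ring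
  have : ∑ i, ∑ j, M i j * (x i - x j) ^ 2
      = ∑ i, ∑ j, M i j * x i ^ 2 + ∑ i, ∑ j, M i j * x j ^ 2
        - 2 * ∑ i, ∑ j, M i j * (x i * x j) := by
    simp_rw [mul_sum, ← sum_add_distrib, ← sum_sub_distrib]
    exact sum_congr rfl fun i _ => sum_congr rfl fun j _ => by ring
  rw [this, hleft, hright, hmid]
  ring

theorem sum_mul_sq_sub_ite_mem [DecidableEq ι] (hM : M.IsSymm) (S : Finset ι) (a b : ℝ) :
    ∑ i, ∑ j, M i j * ((if i ∈ S then a else b) - (if j ∈ S then a else b)) ^ 2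
      = 2 * (a - b) ^ 2 * ∑ i ∈ S, ∑ j ∈ Sᶜ, M i j := by
  have hrow : ∀ i, ∑ j, M i j * ((if i ∈ S then a else b) - (if j ∈ S then a else b)) ^ 2
      = (a - b) ^ 2 * if i ∈ S then ∑ j ∈ Sᶜ, M i j else ∑ j ∈ S, M i j := fun i => by
    rw [← sum_add_sum_compl S, mul_ite, mul_sum, mul_sum]
    split_ifs with hi
    · rw [sum_eq_zero fun j hj => by simp, zero_add]
      exact sum_congr rfl fun j hj => by rw [if_neg (mem_compl.mp hj)]; ring
    · rw [sum_eq_zero (s := Sᶜ) fun j hj => by simp [mem_compl.mp hj], add_zero]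
      exact sum_congr rfl fun j _ => by ring
  have hswap : ∑ i ∈ Sᶜ, ∑ j ∈ S, M i j = ∑ i ∈ S, ∑ j ∈ Sᶜ, M i j := by
    calc ∑ i ∈ Sᶜ, ∑ j ∈ S, M i j = ∑ j ∈ S, ∑ i ∈ Sᶜ, M i j := Finset.sum_comm
      _ = _ := sum_congr rfl fun j _ => sum_congr rfl fun i _ => hM.apply j i
  rw [sum_congr rfl fun i _ => hrow i, ← mul_sum, sum_ite, filter_mem_eq_inter, univ_inter,
    filter_not, filter_mem_eq_inter, univ_inter, ← compl_eq_univ_sdiff, hswap]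
  ring

end Matrix.IsSymm

theorem Matrix.IsSymm.le_lambda2_of_cut {m : ℕ} {M : Matrix (Fin m) (Fin m) ℝ} (hM : M.IsSymm)
    (hM₀ : ∀ i j, 0 ≤ M i j) {d : ℝ} (hrow : ∀ i, ∑ j, M i j = d) {S : Finset (Fin m)}
    (hS : S.Nonempty) (hSc : Sᶜ.Nonempty) :
    d - (∑ i ∈ S, ∑ j ∈ Sᶜ, M i j) / #S - (∑ i ∈ S, ∑ j ∈ Sᶜ, M i j) / #Sᶜ ≤ lambda2 M := by
  set c := ∑ i ∈ S, ∑ j ∈ Sᶜ, M i j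
  set s : ℝ := (#S : ℝ)
  set t : ℝ := (#Sᶜ : ℝ)
  have hs : 0 < s := by simpa [s] using hS.card_pos
  have ht : 0 < t := by simpa [t] using hSc.card_pos
  have hc : 0 ≤ c := sum_nonneg fun i _ => sum_nonneg fun j _ => hM₀ i j
  set x : Fin m → ℝ := fun i => if i ∈ S then t else -s
  have hxx : x ⬝ᵥ x = s * t * (s + t) := by
    simp only [dotProduct, x, Fintype.sum_apply_ite_mem S t (-s) fun y => y * y, nsmul_eq_mul]
    ring
  have hx1 : x ⬝ᵥ 1 = 0 := by
    simp only [dotProduct, x, Pi.one_apply, Fintype.sum_apply_ite_mem S t (-s) fun y => y * 1,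
      nsmul_eq_mul]
    ring
  have hRx : (d - c / s - c / t) * (x ⬝ᵥ x) = x ⬝ᵥ (M *ᵥ x) := by
    rw [hM.dotProduct_mulVec_eq_of_sum_row hrow, hM.sum_mul_sq_sub_ite_mem, hxx]
    field_simp
    ring
  have hRd : d - c / s - c / t ≤ d := by
    linarith [div_nonneg hc hs.le, div_nonneg hc ht.le]
  obtain ⟨i, hi⟩ := hS
  have hx0 : x ≠ 0 := Function.ne_iff.mpr ⟨i, by simp [x, hi, ht.ne']⟩
  have hones : M *ᵥ 1 = d • 1 := by ext i; simp [mulVec, dotProduct, hrow]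
  obtain ⟨k₀, k₁, hk, h₀, h₁⟩ := (isHermitian_iff_isSymm.mpr hM).exists_ne_le_eigenvalues
    hones (Function.ne_iff.mpr ⟨i, by simp⟩) hx0 hx1 hRd hRx.le
  exact le_lambda2_of_le_eigenvalues _ hk h₀ h₁

theorem stmt11_general {n d : ℕ}
    (A : Matrix (Fin n) (Fin n) ℕ)
    (hsym : ∀ i j, A i j = A j i)
    (hreg : ∀ i, ∑ j, A i j = d)
    (S : Finset (Fin n)) (hS : S.Nonempty) (hSne : S ≠ Finset.univ)
    (p : ℕ) (hp : p = ∑ i ∈ S, ∑ j ∈ Sᶜ, A i j) :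
    (d : ℝ) - (p : ℝ) / (S.card : ℝ) - (p : ℝ) / ((n : ℝ) - (S.card : ℝ)) ≤
      lambda2 (A.map (fun x => (x : ℝ))) := by
  have hcut : ∑ i ∈ S, ∑ j ∈ Sᶜ, A.map (fun x => (x : ℝ)) i j = p := by simp [hp]
  have hcard : (n : ℝ) - S.card = Sᶜ.card := by
    have h : (S.card : ℝ) + Sᶜ.card = n := by
      exact_mod_cast (S.card_add_card_compl).trans (Fintype.card_fin n)
    linarith
  have hSc : Sᶜ.Nonempty := by simpa [Finset.nonempty_iff_ne_empty] using hSne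
  have := IsSymm.le_lambda2_of_cut (M := A.map (fun x => (x : ℝ))) (d := d)
    (IsSymm.ext fun i j => by simp [hsym]) (fun i j => by simp) (fun i => by simp [← hreg i])
    hS hSc
  rwa [hcut, ← hcard] at this

/-- for an n-vertex d-regular multigraph G and a nonempty proper
vertex subset S, with p the number of edges between S and its complement,
λ2(G) ≥ d − p/|S| − p/(n−|S|). -/
theorem stmt11 {n d : ℕ}
    (A : Matrix (Fin n) (Fin n) ℕ)
    (hsym : ∀ i j, A i j = A j i) (hdiag : ∀ i, A i i = 0)
    (hreg : ∀ i, ∑ j, A i j = d)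
    (S : Finset (Fin n)) (hS : S.Nonempty) (hSne : S ≠ Finset.univ)
    (p : ℕ) (hp : p = ∑ i ∈ S, ∑ j ∈ Sᶜ, A i j) :
    (d : ℝ) - (p : ℝ) / (S.card : ℝ) - (p : ℝ) / ((n : ℝ) - (S.card : ℝ)) ≤
      lambda2 (A.map (fun x => (x : ℝ))) :=
  stmt11_general A hsym hreg S hS hSne p hp
end

section
/- Let G be a connected n-vertex d-regular multigraph with a cut-vertex v, and suppose the vertex set of G − v is partitioned into nonempty sets S₁ and S₂ of sizes s₁ and s₂ = n − 1 − s₁ respectively, each a union of connected components of G − v. Then λ2(G) ≥ d − dn/(n − 1 + 4·s₁·s₂). -/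
open Matrix Finset BigOperators

/-! The test vector `x` equal to `2s₂ + 1` on `S₁`, `-(2s₁ + 1)` on `S₂` and `s₂ - s₁` at `v` has
mean zero, is constant across every edge of `G - v` and jumps by exactly `n` across every edge
at `v`. Writing `xᵀAx = d‖x‖² - ½ ∑ᵢⱼ Aᵢⱼ (xᵢ - xⱼ)²` and using `‖x‖² = n(n - 1 + 4s₁s₂)`, the
Rayleigh quotient of `x` is at least `d - dn/(n - 1 + 4s₁s₂)`. Since `x` is orthogonal to the
all-ones eigenvector of eigenvalue `d`, the span of the two vectors forces two eigenvalues to be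
at least that bound (min-max, proved here by expanding in an orthonormal eigenbasis). -/

theorem List.Pairwise.le_getD_length_sub_two {α : Type*} [LinearOrder α] {L : List α}
    (hL : L.Pairwise (· ≤ ·)) {r : α} (h : 2 ≤ L.countP (r ≤ ·)) (x : α) :
    r ≤ L.getD (L.length - 2) x := by
  have hlen : 2 ≤ L.length := h.trans (List.countP_le_length)
  by_contra! hlt
  rw [List.getD_eq_getElem _ _ (by omega)] at hlt
  have htake : (L.take (L.length - 1)).countP (r ≤ ·) = 0 := by
    refine List.countP_eq_zero.mpr fun a ha => ?_
    obtain ⟨j, hj, rfl⟩ := List.getElem_of_mem ha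
    rw [List.length_take] at hj
    rw [List.getElem_take]
    have : L[j] ≤ L[L.length - 2] := by
      rcases (show j < L.length - 2 ∨ j = L.length - 2 by omega) with hj' | rfl
      · exact List.pairwise_iff_getElem.mp hL _ _ _ _ hj'
      · exact le_rfl
    simpa using this.trans_lt hlt
  have hdrop : (L.drop (L.length - 1)).countP (r ≤ ·) ≤ 1 :=
    List.countP_le_length.trans (by simp; omega)
  rw [← List.take_append_drop (L.length - 1) L, List.countP_append] at h
  omega

theorem two_le_card_filter_le_of_orthogonal {ι : Type*} [Fintype ι] {μ β c : ι → ℝ} {r : ℝ}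
    (hβ : β ≠ 0) (hβμ : ∀ i, β i ≠ 0 → r ≤ μ i) (horth : ∑ i, β i * c i = 0) (hc : c ≠ 0)
    (hray : r * ∑ i, c i ^ 2 ≤ ∑ i, μ i * c i ^ 2) :
    2 ≤ #{i | r ≤ μ i} := by
  by_contra! hlt
  obtain ⟨i₀, hβi₀⟩ := Function.ne_iff.mp hβ
  have hsingle : ({i | r ≤ μ i} : Finset ι) = {i₀} :=
    eq_singleton_iff_unique_mem.mpr ⟨by simpa using hβμ i₀ hβi₀,
      fun j hj => card_le_one.mp (by omega) j hj i₀ (by simpa using hβμ i₀ hβi₀)⟩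
  have hμlt : ∀ i ≠ i₀, μ i < r := fun i hi => by
    by_contra! h
    exact hi (by simpa [hsingle] using (mem_filter_univ (p := fun i => r ≤ μ i) i).mpr h)
  have hβzero : ∀ i ≠ i₀, β i = 0 := fun i hi => by
    by_contra h
    exact (hμlt i hi).not_ge (hβμ i h)
  have hci₀ : c i₀ = 0 := by
    rw [sum_eq_single i₀ (fun i _ hi => by rw [hβzero i hi, zero_mul]) (by simp)] at horth
    exact (mul_eq_zero.mp horth).resolve_left hβi₀
  obtain ⟨j, hcj⟩ := Function.ne_iff.mp hc
  have hj : j ≠ i₀ := fun h => hcj (h ▸ hci₀)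
  have hstrict : ∑ i, μ i * c i ^ 2 < r * ∑ i, c i ^ 2 := by
    rw [mul_sum]
    refine sum_lt_sum (fun i _ => ?_) ⟨j, mem_univ j, ?_⟩
    · rcases eq_or_ne i i₀ with rfl | hi
      · simp [hci₀]
      · exact mul_le_mul_of_nonneg_right (hμlt i hi).le (sq_nonneg _)
    · exact mul_lt_mul_of_pos_right (hμlt j hj) (sq_pos_iff.mpr hcj)
  linarith

theorem two_le_card_filter_le_of_rayleigh {ι E : Type*} [Fintype ι] [NormedAddCommGroup E]
    [InnerProductSpace ℝ E] {T : E →ₗ[ℝ] E} (hT : T.IsSymmetric) (b : OrthonormalBasis ι ℝ E)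
    {μ : ι → ℝ} (hb : ∀ i, T (b i) = μ i • b i) {u x : E} {d r : ℝ} (hu : T u = d • u)
    (hu0 : u ≠ 0) (hrd : r ≤ d) (hx : x ≠ 0) (hux : inner ℝ u x = 0)
    (hray : r * inner ℝ x x ≤ inner ℝ x (T x)) :
    2 ≤ #{i | r ≤ μ i} := by
  have hcoord : ∀ i y, inner ℝ (b i) (T y) = μ i * inner ℝ (b i) y := fun i y => by
    rw [← hT, hb, real_inner_smul_left]
  have hparseval : ∀ y z, inner ℝ y z = ∑ i, inner ℝ (b i) y * inner ℝ (b i) z := fun y z => by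
    simp_rw [← b.sum_inner_mul_inner y z, real_inner_comm y]
  have hcoord_ne : ∀ y : E, y ≠ 0 → (fun i => inner ℝ (b i) y) ≠ 0 := fun y hy h => by
    refine hy (inner_self_eq_zero (𝕜 := ℝ) |>.mp ?_)
    rw [hparseval y y]
    exact sum_eq_zero fun i _ => by simp [show inner ℝ (b i) y = 0 from congrFun h i]
  refine two_le_card_filter_le_of_orthogonal (hcoord_ne u hu0) (fun i hi => ?_)
    ((hparseval u x).symm.trans hux) (hcoord_ne x hx) ?_
  · have h := hcoord i u
    rw [hu, real_inner_smul_right] at h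
    exact hrd.trans_eq (mul_right_cancel₀ hi h)
  · convert hray using 1
    · rw [hparseval x x]; simp_rw [sq]
    · rw [hparseval x (T x)]; simp_rw [hcoord]; exact sum_congr rfl fun i _ => by ring

theorem le_lambda2_of_two_le_card {n : ℕ} {A : Matrix (Fin n) (Fin n) ℝ} (hA : A.IsHermitian)
    {r : ℝ} (h : 2 ≤ #{i | r ≤ hA.eigenvalues i}) : r ≤ lambda2 A := by
  have hroots : A.charpoly.roots = univ.val.map hA.eigenvalues := by
    simpa using hA.roots_charpoly_eq_eigenvalues
  have hlen : (eigList A).length = n := by simp [eigList, hroots]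
  have hcount : 2 ≤ (eigList A).countP (r ≤ ·) := by
    rwa [← Multiset.coe_countP, eigList, Multiset.sort_eq, hroots, Multiset.countP_map,
      ← filter_val, card_val]
  have key : r ≤ (eigList A).getD ((eigList A).length - 2) 0 :=
    (Multiset.pairwise_sort _ _).le_getD_length_sub_two hcount 0
  rwa [hlen] at key

theorem le_lambda2_of_rayleigh {n : ℕ} {A : Matrix (Fin n) (Fin n) ℝ} (hA : A.IsHermitian)
    {u x : Fin n → ℝ} {d r : ℝ} (hu : A *ᵥ u = d • u) (hu0 : u ≠ 0) (hrd : r ≤ d) (hx : x ≠ 0)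
    (hux : u ⬝ᵥ x = 0) (hray : r * (x ⬝ᵥ x) ≤ x ⬝ᵥ (A *ᵥ x)) : r ≤ lambda2 A := by
  refine le_lambda2_of_two_le_card hA <|
    two_le_card_filter_le_of_rayleigh (isSymmetric_toEuclideanLin_iff.mpr hA)
      hA.eigenvectorBasis (fun i => ?_) (u := WithLp.toLp 2 u) (x := WithLp.toLp 2 x) (d := d)
      ?_ ?_ hrd ?_ ?_ ?_
  · exact congrArg (WithLp.toLp 2) (hA.mulVec_eigenvectorBasis i)
  · exact congrArg (WithLp.toLp 2) hu
  · simpa using hu0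
  · simpa using hx
  · rwa [EuclideanSpace.inner_toLp_toLp, star_trivial, dotProduct_comm]
  · change r * (x ⬝ᵥ star x) ≤ (A *ᵥ x) ⬝ᵥ star x
    rwa [star_trivial, dotProduct_comm (A *ᵥ x)]

theorem dotProduct_mulVec_eq_sub_sum_sq {ι : Type*} [Fintype ι] {A : Matrix ι ι ℝ}
    (hsym : ∀ i j, A i j = A j i) {d : ℝ} (hrow : ∀ i, ∑ j, A i j = d) (x : ι → ℝ) :
    x ⬝ᵥ (A *ᵥ x) = d * (x ⬝ᵥ x) - (∑ i, ∑ j, A i j * (x i - x j) ^ 2) / 2 := by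
  have hleft : ∑ i, ∑ j, A i j * x i ^ 2 = d * (x ⬝ᵥ x) := by
    simp_rw [← sum_mul, hrow, dotProduct, mul_sum, sq]
  have hright : ∑ i, ∑ j, A i j * x j ^ 2 = d * (x ⬝ᵥ x) := by
    rw [sum_comm, ← hleft]
    simp_rw [hsym]
  have hmid : ∑ i, ∑ j, A i j * x i * x j = x ⬝ᵥ (A *ᵥ x) := by
    simp_rw [dotProduct, mulVec, dotProduct, mul_sum]
    exact sum_congr rfl fun i _ => sum_congr rfl fun j _ => by ring
  have hexpand : ∑ i, ∑ j, A i j * (x i - x j) ^ 2 =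
      ∑ i, ∑ j, A i j * x i ^ 2 + ∑ i, ∑ j, A i j * x j ^ 2 - 2 * ∑ i, ∑ j, A i j * x i * x j := by
    simp_rw [mul_sum, ← sum_add_distrib, ← sum_sub_distrib]
    exact sum_congr rfl fun i _ => sum_congr rfl fun j _ => by ring
  rw [hexpand, hleft, hright, hmid]
  ring

theorem sum_mul_sq_sub_eq_of_cutVertex {ι : Type*} [Fintype ι] [DecidableEq ι]
    {A : Matrix ι ι ℝ} (hsym : ∀ i j, A i j = A j i) {d : ℝ} (hrow : ∀ i, ∑ j, A i j = d)
    {v : ι} {x : ι → ℝ} {m : ℝ} (hconst : ∀ i j, i ≠ v → j ≠ v → A i j ≠ 0 → x i = x j)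
    (hjump : ∀ i, i ≠ v → (x i - x v) ^ 2 = m) :
    ∑ i, ∑ j, A i j * (x i - x j) ^ 2 = 2 * m * (d - A v v) := by
  have hrow_v : ∑ i ∈ {v}ᶜ, A v i = d - A v v := by
    rw [← hrow v, Fintype.sum_eq_add_sum_compl v]; ring
  have hterm_v : ∀ j ∈ ({v}ᶜ : Finset ι), A v j * (x v - x j) ^ 2 = m * A v j := fun j hj => by
    rw [← hjump j (by simpa using hj)]; ring
  have hterm : ∀ i ∈ ({v}ᶜ : Finset ι), ∑ j, A i j * (x i - x j) ^ 2 = m * A v i := fun i hi => by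
    have hi : i ≠ v := by simpa using hi
    rw [Fintype.sum_eq_add_sum_compl v, hjump i hi, hsym, mul_comm]
    refine add_eq_left.mpr (sum_eq_zero fun j hj => ?_)
    by_cases hA : A i j = 0
    · rw [hA, zero_mul]
    · rw [hconst i j hi (by simpa using hj) hA, sub_self]; ring
  rw [Fintype.sum_eq_add_sum_compl v, sum_congr rfl hterm, Fintype.sum_eq_add_sum_compl v,
    sum_congr rfl hterm_v, sub_self, ← mul_sum, hrow_v]
  ring

noncomputable def cutVertexVector {ι : Type*} [DecidableEq ι] (S₁ S₂ : Finset ι) : ι → ℝ :=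
  fun i => if i ∈ S₁ then 2 * #S₂ + 1 else if i ∈ S₂ then -(2 * #S₁ + 1) else (#S₂ : ℝ) - #S₁

section CutVertexVector

variable {ι : Type*} [DecidableEq ι] {S₁ S₂ : Finset ι} {v : ι}

theorem cutVertexVector_of_mem_left {i : ι} (hi : i ∈ S₁) :
    cutVertexVector S₁ S₂ i = 2 * #S₂ + 1 := if_pos hi

theorem cutVertexVector_of_mem_right (hdisj : Disjoint S₁ S₂) {i : ι} (hi : i ∈ S₂) :
    cutVertexVector S₁ S₂ i = -(2 * #S₁ + 1) := by
  rw [cutVertexVector, if_neg (disjoint_right.mp hdisj hi), if_pos hi]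

theorem cutVertexVector_of_union_eq_compl [Fintype ι] (hunion : S₁ ∪ S₂ = {v}ᶜ) :
    cutVertexVector S₁ S₂ v = #S₂ - #S₁ := by
  have hv : v ∉ S₁ ∪ S₂ := by simp [hunion]
  rw [mem_union, not_or] at hv
  rw [cutVertexVector, if_neg hv.1, if_neg hv.2]

theorem sum_comp_cutVertexVector [Fintype ι] (hdisj : Disjoint S₁ S₂) (hunion : S₁ ∪ S₂ = {v}ᶜ)
    (f : ℝ → ℝ) :
    ∑ i, f (cutVertexVector S₁ S₂ i) =
      #S₁ * f (2 * #S₂ + 1) + #S₂ * f (-(2 * #S₁ + 1)) + f (#S₂ - #S₁) := by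
  rw [Fintype.sum_eq_add_sum_compl v, ← hunion, sum_union hdisj,
    sum_congr rfl fun i hi => congrArg f (cutVertexVector_of_mem_left hi),
    sum_congr rfl fun i hi => congrArg f (cutVertexVector_of_mem_right hdisj hi),
    cutVertexVector_of_union_eq_compl hunion]
  simp only [sum_const, nsmul_eq_mul]
  ring

theorem sum_cutVertexVector [Fintype ι] (hdisj : Disjoint S₁ S₂) (hunion : S₁ ∪ S₂ = {v}ᶜ) :
    ∑ i, cutVertexVector S₁ S₂ i = 0 :=
  (sum_comp_cutVertexVector hdisj hunion fun t => t).trans (by ring)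

theorem cutVertexVector_dotProduct_self [Fintype ι] (hdisj : Disjoint S₁ S₂)
    (hunion : S₁ ∪ S₂ = {v}ᶜ) :
    cutVertexVector S₁ S₂ ⬝ᵥ cutVertexVector S₁ S₂ =
      (#S₁ + #S₂ + 1) * (#S₁ + #S₂ + 4 * #S₁ * #S₂) := by
  rw [dotProduct, sum_comp_cutVertexVector hdisj hunion (fun t => t * t)]
  ring

theorem cutVertexVector_sub_sq [Fintype ι] (hdisj : Disjoint S₁ S₂) (hunion : S₁ ∪ S₂ = {v}ᶜ)
    {i : ι} (hi : i ≠ v) :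
    (cutVertexVector S₁ S₂ i - cutVertexVector S₁ S₂ v) ^ 2 = (#S₁ + #S₂ + 1) ^ 2 := by
  have hi' : i ∈ S₁ ∪ S₂ := by simpa [hunion] using hi
  rw [cutVertexVector_of_union_eq_compl hunion]
  rcases mem_union.mp hi' with h | h
  · rw [cutVertexVector_of_mem_left h]; ring
  · rw [cutVertexVector_of_mem_right hdisj h]; ring

theorem cutVertexVector_eq_of_ne_zero [Fintype ι] {A : Matrix ι ι ℝ}
    (hsym : ∀ i j, A i j = A j i) (hdisj : Disjoint S₁ S₂) (hunion : S₁ ∪ S₂ = {v}ᶜ)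
    (hcomp : ∀ i ∈ S₁, ∀ j ∈ S₂, A i j = 0) {i j : ι} (hi : i ≠ v) (hj : j ≠ v) (hA : A i j ≠ 0) :
    cutVertexVector S₁ S₂ i = cutVertexVector S₁ S₂ j := by
  have hi' : i ∈ S₁ ∪ S₂ := by simpa [hunion] using hi
  have hj' : j ∈ S₁ ∪ S₂ := by simpa [hunion] using hj
  rcases mem_union.mp hi' with hi₁ | hi₂ <;> rcases mem_union.mp hj' with hj₁ | hj₂
  · rw [cutVertexVector_of_mem_left hi₁, cutVertexVector_of_mem_left hj₁]
  · exact absurd (hcomp i hi₁ j hj₂) hA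
  · exact absurd (hsym i j ▸ hcomp j hj₁ i hi₂) hA
  · rw [cutVertexVector_of_mem_right hdisj hi₂, cutVertexVector_of_mem_right hdisj hj₂]

theorem le_dotProduct_mulVec_cutVertexVector [Fintype ι] {A : Matrix ι ι ℝ}
    (hsym : ∀ i j, A i j = A j i) {d : ℝ} (hrow : ∀ i, ∑ j, A i j = d) (hAvv : 0 ≤ A v v)
    (hdisj : Disjoint S₁ S₂) (hunion : S₁ ∪ S₂ = {v}ᶜ) (hcomp : ∀ i ∈ S₁, ∀ j ∈ S₂, A i j = 0) :
    d * (cutVertexVector S₁ S₂ ⬝ᵥ cutVertexVector S₁ S₂) - (#S₁ + #S₂ + 1) ^ 2 * d ≤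
      cutVertexVector S₁ S₂ ⬝ᵥ (A *ᵥ cutVertexVector S₁ S₂) := by
  rw [dotProduct_mulVec_eq_sub_sum_sq hsym hrow,
    sum_mul_sq_sub_eq_of_cutVertex hsym hrow
      (fun i j hi hj hA => cutVertexVector_eq_of_ne_zero hsym hdisj hunion hcomp hi hj hA)
      (fun i hi => cutVertexVector_sub_sq hdisj hunion hi)]
  nlinarith [mul_nonneg (sq_nonneg ((#S₁ : ℝ) + #S₂ + 1)) hAvv]

end CutVertexVector

theorem stmt12_general {n d : ℕ}
    (A : Matrix (Fin n) (Fin n) ℕ)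
    (hsym : ∀ i j, A i j = A j i)
    (hreg : ∀ i, ∑ j, A i j = d)
    (v : Fin n)
    (S₁ S₂ : Finset (Fin n)) (h1 : S₁.Nonempty)
    (hdisj : Disjoint S₁ S₂) (hunion : S₁ ∪ S₂ = ({v} : Finset (Fin n))ᶜ)
    (hcomp : ∀ i ∈ S₁, ∀ j ∈ S₂, A i j = 0)
    (s₁ s₂ : ℕ) (hs₁ : s₁ = S₁.card) (hs₂ : s₂ = S₂.card) :
    (d : ℝ) - (d : ℝ) * (n : ℝ) / ((n : ℝ) - 1 + 4 * (s₁ : ℝ) * (s₂ : ℝ)) ≤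
      lambda2 (A.map (fun x => (x : ℝ))) := by
  subst hs₁ hs₂
  set A' := A.map (fun x => (x : ℝ))
  have hsym' : ∀ i j, A' i j = A' j i := fun i j => by simp [A', hsym i j]
  have hrow' : ∀ i, ∑ j, A' i j = d := fun i => by simp [A', ← hreg i]
  have hcard : (n : ℝ) = #S₁ + #S₂ + 1 := by
    have h := congrArg card hunion
    rw [card_union_of_disjoint hdisj, card_compl, card_singleton, Fintype.card_fin] at h
    have := v.pos
    norm_cast
    omega
  obtain ⟨i₁, hi₁⟩ := h1
  have hS₁ : (1 : ℝ) ≤ #S₁ := by exact_mod_cast card_pos.mpr ⟨i₁, hi₁⟩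
  have hD : 0 < (n : ℝ) - 1 + 4 * #S₁ * #S₂ := by
    have : (0 : ℝ) ≤ #S₂ := by positivity
    rw [hcard]; nlinarith
  refine le_lambda2_of_rayleigh (u := 1) (x := cutVertexVector S₁ S₂)
    (IsHermitian.ext fun i j => by simp [hsym' j i]) ?_ (fun h => one_ne_zero (congrFun h v))
    (sub_le_self _ (by positivity)) (fun h => ?_) ((one_dotProduct _).trans ?_) ?_
  · ext i
    simp [mulVec, dotProduct, hrow']
  · have := congrFun h i₁
    rw [cutVertexVector_of_mem_left hi₁, Pi.zero_apply] at this
    exact absurd this (by positivity)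
  · exact sum_cutVertexVector hdisj hunion
  calc _ = d * (cutVertexVector S₁ S₂ ⬝ᵥ cutVertexVector S₁ S₂) - (#S₁ + #S₂ + 1) ^ 2 * d := by
        rw [cutVertexVector_dotProduct_self hdisj hunion]
        field_simp
        rw [hcard]
        ring
    _ ≤ _ := le_dotProduct_mulVec_cutVertexVector hsym' hrow' (by simp [A']) hdisj hunion
        (fun i hi j hj => by simp [A', hcomp i hi j hj])

/-- for a connected n-vertex d-regular multigraph G with a
cut-vertex v, if the vertices of G − v are partitioned into nonempty sets S₁
and S₂ of sizes s₁ and s₂ = n − 1 − s₁, each a union of connected components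
of G − v, then λ2(G) ≥ d − dn/(n − 1 + 4s₁s₂). -/
theorem stmt12 {n d : ℕ}
    (A : Matrix (Fin n) (Fin n) ℕ)
    (hsym : ∀ i j, A i j = A j i) (hdiag : ∀ i, A i i = 0)
    (hreg : ∀ i, ∑ j, A i j = d)
    (hconn : (toSimple A).Connected)
    (v : Fin n)
    (hcut : ¬ ((toSimple A).induce ({v}ᶜ : Set (Fin n))).Connected)
    (S₁ S₂ : Finset (Fin n)) (h1 : S₁.Nonempty) (h2 : S₂.Nonempty)
    (hdisj : Disjoint S₁ S₂) (hunion : S₁ ∪ S₂ = ({v} : Finset (Fin n))ᶜ)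
    (hcomp : ∀ i ∈ S₁, ∀ j ∈ S₂, A i j = 0)
    (s₁ s₂ : ℕ) (hs₁ : s₁ = S₁.card) (hs₂ : s₂ = S₂.card)
    (hs₂' : s₂ = n - 1 - s₁) :
    (d : ℝ) - (d : ℝ) * (n : ℝ) / ((n : ℝ) - 1 + 4 * (s₁ : ℝ) * (s₂ : ℝ)) ≤
      lambda2 (A.map (fun x => (x : ℝ))) :=
  stmt12_general A hsym hreg v S₁ S₂ h1 hdisj hunion hcomp s₁ s₂ hs₁ hs₂
end

section
/- Let G be a connected n-vertex d-regular multigraph with a cut-edge e such that the two connected components of G − e have a and b vertices respectively (so a + b = n). Then λ2(G) ≥ d − 1/a − 1/b. -/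
/-! All eigenvalues of `A` are at most `d` (Gershgorin), and by Ky Fan's principle `λ₁ + λ₂` is
at least the sum of the Rayleigh quotients of any two orthogonal nonzero vectors. Take the
all-ones vector, whose quotient is `d`, and the vector `x` equal to `b` on the side `S` of size `a`
and to `-a` on the other side. Since `2 xᵀAx = 2d‖x‖² - ∑ᵢⱼ Aᵢⱼ (xᵢ - xⱼ)²` and the cut edge is the
only edge joining the two sides, the quotient of `x` is `d - 1/a - 1/b`. Hence
`d + λ₂ ≥ λ₁ + λ₂ ≥ 2d - 1/a - 1/b`. -/

open Matrix Finset BigOperators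

open scoped RealInnerProductSpace

theorem sum_mul_le_add_of_antitone {m : ℕ} {μ t : Fin (m + 2) → ℝ} (hμ : Antitone μ)
    (ht₀ : ∀ k, 0 ≤ t k) (ht₁ : ∀ k, t k ≤ 1) (ht : ∑ k, t k = 2) :
    ∑ k, μ k * t k ≤ μ 0 + μ 1 := by
  rw [Fin.sum_univ_succ] at ht ⊢
  have htail : ∑ k : Fin (m + 1), μ k.succ * t k.succ ≤ μ 1 * ∑ k : Fin (m + 1), t k.succ := by
    rw [Finset.mul_sum]
    exact Finset.sum_le_sum fun k _ =>
      mul_le_mul_of_nonneg_right (hμ (Fin.succ_le_succ_iff.mpr k.zero_le)) (ht₀ _)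
  rw [show ∑ k : Fin (m + 1), t k.succ = 2 - t 0 by linarith] at htail
  nlinarith [mul_nonneg (sub_nonneg.mpr (hμ (Fin.zero_le 1))) (sub_nonneg.mpr (ht₁ 0))]

theorem Finset.sum_comp_of_two_valued {ι α M : Type*} [Fintype ι] [DecidableEq ι]
    [AddCommMonoid M] {S : Finset ι} {x : ι → α} {p q : α} (hp : ∀ i ∈ S, x i = p)
    (hq : ∀ i ∈ Sᶜ, x i = q) (f : α → M) :
    ∑ i, f (x i) = #S • f p + #Sᶜ • f q := by
  rw [← Finset.sum_add_sum_compl S, Finset.sum_congr rfl fun i hi => congrArg f (hp i hi),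
    Finset.sum_congr rfl fun i hi => congrArg f (hq i hi), Finset.sum_const, Finset.sum_const]

namespace LinearMap.IsSymmetric

variable {E : Type*} [NormedAddCommGroup E] [InnerProductSpace ℝ E] [FiniteDimensional ℝ E]
  {T : E →ₗ[ℝ] E}

theorem inner_apply_self_eq_sum {n : ℕ} (hT : T.IsSymmetric) (hn : Module.finrank ℝ E = n)
    (x : E) : ⟪T x, x⟫ = ∑ i, hT.eigenvalues hn i * ⟪hT.eigenvectorBasis hn i, x⟫ ^ 2 := by
  rw [← (hT.eigenvectorBasis hn).sum_inner_mul_inner (T x) x]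
  refine Finset.sum_congr rfl fun i _ => ?_
  rw [hT, hT.apply_eigenvectorBasis, real_inner_smul_right, real_inner_comm x]
  simp only [RCLike.ofReal_real_eq_id, id_eq]
  ring

theorem inner_add_inner_le {m : ℕ} (hT : T.IsSymmetric) (hn : Module.finrank ℝ E = m + 2)
    {x y : E} (hxy : Orthonormal ℝ ![x, y]) :
    ⟪T x, x⟫ + ⟪T y, y⟫ ≤ hT.eigenvalues hn 0 + hT.eigenvalues hn 1 := by
  set w := hT.eigenvectorBasis hn
  have hbessel (k : Fin (m + 2)) : ⟪w k, x⟫ ^ 2 + ⟪w k, y⟫ ^ 2 ≤ 1 := by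
    have h := hxy.sum_inner_products_le (w k) (s := Finset.univ)
    simpa [Fin.sum_univ_two, w.orthonormal.norm_eq_one, real_inner_comm] using h
  have hparseval : ∑ k, (⟪w k, x⟫ ^ 2 + ⟪w k, y⟫ ^ 2) = 2 := by
    have hx : ‖x‖ = 1 := hxy.norm_eq_one 0
    have hy : ‖y‖ = 1 := hxy.norm_eq_one 1
    rw [Finset.sum_add_distrib, w.sum_sq_inner_right, w.sum_sq_inner_right, hx, hy]
    norm_num
  calc ⟪T x, x⟫ + ⟪T y, y⟫
      = ∑ k, hT.eigenvalues hn k * (⟪w k, x⟫ ^ 2 + ⟪w k, y⟫ ^ 2) := by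
        simp only [hT.inner_apply_self_eq_sum hn, mul_add, Finset.sum_add_distrib, w]
    _ ≤ hT.eigenvalues hn 0 + hT.eigenvalues hn 1 :=
        sum_mul_le_add_of_antitone (hT.eigenvalues_antitone hn)
          (fun _ => by positivity) hbessel hparseval

theorem rayleigh_add_rayleigh_le {m : ℕ} (hT : T.IsSymmetric) (hn : Module.finrank ℝ E = m + 2)
    {x y : E} (hx : x ≠ 0) (hy : y ≠ 0) (hxy : ⟪x, y⟫ = 0) :
    ⟪T x, x⟫ / ‖x‖ ^ 2 + ⟪T y, y⟫ / ‖y‖ ^ 2 ≤ hT.eigenvalues hn 0 + hT.eigenvalues hn 1 := by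
  have hnormalize (z : E) : ⟪T (‖z‖⁻¹ • z), ‖z‖⁻¹ • z⟫ = ⟪T z, z⟫ / ‖z‖ ^ 2 := by
    rw [map_smul, real_inner_smul_left, real_inner_smul_right]
    ring
  have horth : Orthonormal ℝ ![‖x‖⁻¹ • x, ‖y‖⁻¹ • y] := by
    simp [norm_smul, hx, hy, real_inner_smul_left, real_inner_smul_right, hxy]
  simpa only [hnormalize] using hT.inner_add_inner_le hn horth

end LinearMap.IsSymmetric

theorem lambda2_eq_eigenvalues_one {m : ℕ} {A : Matrix (Fin (m + 2)) (Fin (m + 2)) ℝ}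
    (hA : (Matrix.toEuclideanLin A).IsSymmetric) :
    lambda2 A = hA.eigenvalues finrank_euclideanSpace_fin 1 := by
  have hasc : eigList A = (A.charpoly.roots.sort (· ≥ ·)).reverse := by
    rw [eigList]
    apply List.Perm.eq_reverse_of_sortedLE_of_sortedGE
    · rw [← Multiset.coe_eq_coe, Multiset.sort_eq, Multiset.sort_eq]
    · exact List.sortedLE_iff_pairwise.mpr (Multiset.pairwise_sort _ _)
    · exact List.sortedGE_iff_pairwise.mpr (Multiset.pairwise_sort _ _)
  have hdesc := hA.sort_roots_charpoly_eq_eigenvalues finrank_euclideanSpace_fin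
  have hcharpoly := Matrix.charpoly_toLin A (PiLp.basisFun 2 ℝ (Fin (m + 2)))
  rw [← Matrix.toLpLin_eq_toLin] at hcharpoly
  simp only [hcharpoly, RCLike.re_to_real, Multiset.map_id'] at hdesc
  rw [lambda2, hasc, hdesc, List.getD_eq_getElem _ _ (by simp)]
  simp

theorem Matrix.rayleigh_add_rayleigh_le {m : ℕ} {A : Matrix (Fin (m + 2)) (Fin (m + 2)) ℝ}
    (hT : (Matrix.toEuclideanLin A).IsSymmetric) {x y : Fin (m + 2) → ℝ} (hx : x ≠ 0)
    (hy : y ≠ 0) (hxy : x ⬝ᵥ y = 0) :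
    x ⬝ᵥ A *ᵥ x / (x ⬝ᵥ x) + y ⬝ᵥ A *ᵥ y / (y ⬝ᵥ y)
      ≤ hT.eigenvalues finrank_euclideanSpace_fin 0
        + hT.eigenvalues finrank_euclideanSpace_fin 1 := by
  have hquad (z : Fin (m + 2) → ℝ) :
      ⟪Matrix.toEuclideanLin A (WithLp.toLp 2 z), WithLp.toLp 2 z⟫ = z ⬝ᵥ A *ᵥ z := by
    rw [Matrix.toLpLin_toLp, EuclideanSpace.inner_toLp_toLp, star_trivial, Matrix.toLin'_apply]
  have hnorm (z : Fin (m + 2) → ℝ) : ‖WithLp.toLp 2 z‖ ^ 2 = z ⬝ᵥ z := by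
    rw [← real_inner_self_eq_norm_sq, EuclideanSpace.inner_toLp_toLp, star_trivial]
  have h := hT.rayleigh_add_rayleigh_le finrank_euclideanSpace_fin
    (x := WithLp.toLp 2 x) (y := WithLp.toLp 2 y) (by simpa using hx) (by simpa using hy)
    (by rwa [EuclideanSpace.inner_toLp_toLp, star_trivial, dotProduct_comm])
  rwa [hquad, hquad, hnorm, hnorm] at h

theorem Matrix.le_of_hasEigenvalue_toLin' {ι : Type*} [Fintype ι] [DecidableEq ι]
    {A : Matrix ι ι ℝ} (hA : ∀ i j, 0 ≤ A i j) {d : ℝ} (hrow : ∀ i, ∑ j, A i j ≤ d) {μ : ℝ}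
    (hμ : Module.End.HasEigenvalue (Matrix.toLin' A) μ) : μ ≤ d := by
  obtain ⟨k, hk⟩ := eigenvalue_mem_ball hμ
  rw [Metric.mem_closedBall, Real.dist_eq] at hk
  calc μ ≤ A k k + ∑ j ∈ Finset.univ.erase k, ‖A k j‖ := by linarith [le_abs_self (μ - A k k)]
    _ = ∑ j, A k j := by
      simp only [Real.norm_of_nonneg (hA _ _), Finset.add_sum_erase _ _ (Finset.mem_univ k)]
    _ ≤ d := hrow k

theorem LinearMap.IsSymmetric.eigenvalues_toEuclideanLin_le {ι : Type*} [Fintype ι]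
    [DecidableEq ι] {A : Matrix ι ι ℝ} {n : ℕ} (hT : (Matrix.toEuclideanLin A).IsSymmetric)
    (hn : Module.finrank ℝ (EuclideanSpace ℝ ι) = n) (hA : ∀ i j, 0 ≤ A i j) {d : ℝ}
    (hrow : ∀ i, ∑ j, A i j ≤ d) (k : Fin n) : hT.eigenvalues hn k ≤ d := by
  refine Matrix.le_of_hasEigenvalue_toLin' hA hrow
    (Module.End.hasEigenvalue_iff_mem_spectrum.mpr ?_)
  rw [Matrix.spectrum_toLin', ← Matrix.spectrum_toLpLin 2]
  exact (hT.hasEigenvalue_eigenvalues hn k).mem_spectrum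

section QuadraticForm

variable {ι R : Type*} [Fintype ι] [CommRing R] {A : Matrix ι ι R}

theorem Matrix.IsSymm.two_mul_dotProduct_mulVec_self (hA : A.IsSymm) {d : R}
    (hrow : ∀ i, ∑ j, A i j = d) (x : ι → R) :
    2 * (x ⬝ᵥ A *ᵥ x) = 2 * d * (x ⬝ᵥ x) - ∑ i, ∑ j, A i j * (x i - x j) ^ 2 := by
  have hleft : ∑ i, ∑ j, A i j * x i ^ 2 = d * (x ⬝ᵥ x) := by
    simp only [← Finset.sum_mul, hrow, dotProduct, Finset.mul_sum, sq]
  have hright : ∑ i, ∑ j, A i j * x j ^ 2 = d * (x ⬝ᵥ x) := by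
    rw [Finset.sum_comm, ← hleft]
    simp only [hA.apply]
  have hmid : x ⬝ᵥ A *ᵥ x = ∑ i, ∑ j, A i j * (x i * x j) := by
    simp only [dotProduct, Matrix.mulVec, Finset.mul_sum]
    exact Finset.sum_congr rfl fun i _ => Finset.sum_congr rfl fun j _ => by ring
  have hexpand : ∑ i, ∑ j, A i j * (x i - x j) ^ 2 = ∑ i, ∑ j, A i j * x i ^ 2
      - 2 * ∑ i, ∑ j, A i j * (x i * x j) + ∑ i, ∑ j, A i j * x j ^ 2 := by
    simp only [Finset.mul_sum, ← Finset.sum_sub_distrib, ← Finset.sum_add_distrib]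
    exact Finset.sum_congr rfl fun i _ => Finset.sum_congr rfl fun j _ => by ring
  rw [hexpand, hleft, hright, hmid]
  ring

theorem Matrix.IsSymm.sum_mul_sub_sq_of_two_valued [DecidableEq ι] (hA : A.IsSymm)
    {S : Finset ι} {x : ι → R} {p q : R} (hp : ∀ i ∈ S, x i = p) (hq : ∀ i ∈ Sᶜ, x i = q) :
    ∑ i, ∑ j, A i j * (x i - x j) ^ 2 = 2 * (p - q) ^ 2 * ∑ i ∈ S, ∑ j ∈ Sᶜ, A i j := by
  have hcomm : ∑ i ∈ Sᶜ, ∑ j ∈ S, A i j = ∑ i ∈ S, ∑ j ∈ Sᶜ, A i j :=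
    calc ∑ i ∈ Sᶜ, ∑ j ∈ S, A i j = ∑ j ∈ S, ∑ i ∈ Sᶜ, A i j := Finset.sum_comm
      _ = _ := by simp only [hA.apply]
  have hblock {T U : Finset ι} {s t : R} (hs : ∀ i ∈ T, x i = s) (ht : ∀ j ∈ U, x j = t) :
      ∑ i ∈ T, ∑ j ∈ U, A i j * (x i - x j) ^ 2 = (s - t) ^ 2 * ∑ i ∈ T, ∑ j ∈ U, A i j := by
    simp only [Finset.mul_sum]
    exact Finset.sum_congr rfl fun i hi => Finset.sum_congr rfl fun j hj => by
      rw [hs i hi, ht j hj, mul_comm]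
  simp only [← Finset.sum_add_sum_compl S, Finset.sum_add_distrib]
  rw [hblock hp hp, hblock hp hq, hblock hq hp, hblock hq hq, hcomm]
  ring

end QuadraticForm

theorem Matrix.rayleigh_one_of_sum_row_eq {ι : Type*} [Fintype ι] [Nonempty ι]
    {A : Matrix ι ι ℝ} {d : ℝ} (hrow : ∀ i, ∑ j, A i j = d) :
    (1 : ι → ℝ) ⬝ᵥ A *ᵥ 1 / ((1 : ι → ℝ) ⬝ᵥ 1) = d := by
  simp [Matrix.mulVec, dotProduct, hrow]

section CutVector

variable {ι : Type*} [Fintype ι] [DecidableEq ι]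

def cutVector (S : Finset ι) : ι → ℝ := fun i => if i ∈ S then (#Sᶜ : ℝ) else -(#S : ℝ)

theorem cutVector_of_mem {S : Finset ι} {i : ι} (hi : i ∈ S) : cutVector S i = #Sᶜ := if_pos hi

theorem cutVector_of_mem_compl {S : Finset ι} {i : ι} (hi : i ∈ Sᶜ) : cutVector S i = -(#S : ℝ) :=
  if_neg (Finset.mem_compl.mp hi)

theorem cutVector_ne_zero {S : Finset ι} (hS : S.Nonempty) (hSc : Sᶜ.Nonempty) :
    cutVector S ≠ 0 := fun h => by
  obtain ⟨i, hi⟩ := hS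
  simpa [cutVector_of_mem hi, hSc.card_pos.ne'] using congrFun h i

theorem one_dotProduct_cutVector (S : Finset ι) : 1 ⬝ᵥ cutVector S = 0 := by
  rw [one_dotProduct]
  exact (Finset.sum_comp_of_two_valued (fun _ => cutVector_of_mem)
    (fun _ => cutVector_of_mem_compl) id).trans (by simp; ring)

theorem cutVector_dotProduct_self (S : Finset ι) :
    cutVector S ⬝ᵥ cutVector S = #S * #Sᶜ * (#S + #Sᶜ) := by
  rw [dotProduct, Finset.sum_comp_of_two_valued (fun _ => cutVector_of_mem)
    (fun _ => cutVector_of_mem_compl) (fun t => t * t)]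
  simp only [nsmul_eq_mul]
  ring

theorem Matrix.IsSymm.rayleigh_cutVector {A : Matrix ι ι ℝ} (hA : A.IsSymm) {d : ℝ}
    (hrow : ∀ i, ∑ j, A i j = d) {S : Finset ι} (hS : S.Nonempty) (hSc : Sᶜ.Nonempty) :
    cutVector S ⬝ᵥ A *ᵥ cutVector S / (cutVector S ⬝ᵥ cutVector S)
      = d - (∑ i ∈ S, ∑ j ∈ Sᶜ, A i j) * (1 / #S + 1 / #Sᶜ) := by
  have hquad := hA.two_mul_dotProduct_mulVec_self hrow (cutVector S)
  rw [hA.sum_mul_sub_sq_of_two_valued (fun _ => cutVector_of_mem)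
    (fun _ => cutVector_of_mem_compl), cutVector_dotProduct_self] at hquad
  have ha : (#S : ℝ) ≠ 0 := by exact_mod_cast hS.card_pos.ne'
  have hb : (#Sᶜ : ℝ) ≠ 0 := by exact_mod_cast hSc.card_pos.ne'
  rw [cutVector_dotProduct_self, div_eq_iff (by positivity)]
  field_simp
  linear_combination hquad / 2

end CutVector

theorem sum_sum_compl_eq_one_of_deleteEdge {n : ℕ} {A : Matrix (Fin n) (Fin n) ℕ} {u v : Fin n}
    {S : Finset (Fin n)} (hu : u ∈ S) (hv : v ∈ Sᶜ) (he : 1 ≤ A u v)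
    (hcross : ∀ i ∈ S, ∀ j ∈ Sᶜ, deleteEdge A u v i j = 0) :
    ∑ i ∈ S, ∑ j ∈ Sᶜ, A i j = 1 := by
  have hentry : ∀ i ∈ S, ∀ j ∈ Sᶜ, A i j = if i = u ∧ j = v then 1 else 0 := by
    intro i hi j hj
    have h := hcross i hi j hj
    have hvu : ¬(i = v ∧ j = u) := fun h' => Finset.mem_compl.mp hv (h'.1 ▸ hi)
    by_cases huv : i = u ∧ j = v
    · obtain ⟨rfl, rfl⟩ := huv
      simp only [deleteEdge, Matrix.of_apply, true_and, true_or, if_true] at h ⊢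
      omega
    · simpa [deleteEdge, huv, hvu] using h
  rw [Finset.sum_congr rfl fun i hi => Finset.sum_congr rfl (hentry i hi)]
  simp [ite_and, hu, hv]

theorem stmt14_general {n d : ℕ}
    (A : Matrix (Fin n) (Fin n) ℕ)
    (hsym : ∀ i j, A i j = A j i)
    (hreg : ∀ i, ∑ j, A i j = d)
    (u v : Fin n) (he : 1 ≤ A u v)
    (S : Finset (Fin n)) (hu : u ∈ S) (hv : v ∈ Sᶜ)
    (hcross : ∀ i ∈ S, ∀ j ∈ Sᶜ, deleteEdge A u v i j = 0)
    (a b : ℕ) (ha : S.card = a) (hb : (Sᶜ).card = b) :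
    (d : ℝ) - 1 / (a : ℝ) - 1 / (b : ℝ) ≤
      lambda2 (A.map (fun x => (x : ℝ))) := by
  have huv : u ≠ v := fun h => Finset.mem_compl.mp hv (h ▸ hu)
  have hn : 1 < n := by simpa using Fintype.one_lt_card_iff.mpr ⟨u, v, huv⟩
  obtain ⟨m, rfl⟩ : ∃ m, n = m + 2 := ⟨n - 2, by omega⟩
  set B := A.map (fun x => (x : ℝ))
  have hB : B.IsSymm := (Matrix.IsSymm.ext fun i j => hsym j i).map _
  have hT : (Matrix.toEuclideanLin B).IsSymmetric :=
    Matrix.isSymmetric_toEuclideanLin_iff.mpr (Matrix.isHermitian_iff_isSymm.mpr hB)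
  have hrow (i : Fin (m + 2)) : ∑ j, B i j = d := by simp [B, ← hreg i]
  have hcut : ∑ i ∈ S, ∑ j ∈ Sᶜ, B i j = 1 := by
    simp [B, ← Nat.cast_sum, sum_sum_compl_eq_one_of_deleteEdge hu hv he hcross]
  have hray := Matrix.rayleigh_add_rayleigh_le hT one_ne_zero
    (cutVector_ne_zero ⟨u, hu⟩ ⟨v, hv⟩) (one_dotProduct_cutVector S)
  rw [Matrix.rayleigh_one_of_sum_row_eq hrow, hB.rayleigh_cutVector hrow ⟨u, hu⟩ ⟨v, hv⟩, hcut,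
    ha, hb] at hray
  have htop := hT.eigenvalues_toEuclideanLin_le finrank_euclideanSpace_fin
    (fun i j => Nat.cast_nonneg (A i j)) (fun i => (hrow i).le) 0
  rw [lambda2_eq_eigenvalues_one hT]
  linarith

/-- for a connected n-vertex d-regular multigraph G with a
cut-edge e = uv whose removal leaves two connected components of sizes a and b,
λ2(G) ≥ d − 1/a − 1/b. -/
theorem stmt14 {n d : ℕ}
    (A : Matrix (Fin n) (Fin n) ℕ)
    (hsym : ∀ i j, A i j = A j i) (hdiag : ∀ i, A i i = 0)
    (hreg : ∀ i, ∑ j, A i j = d)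
    (hconn : (toSimple A).Connected)
    (u v : Fin n) (huv : u ≠ v) (he : 1 ≤ A u v)
    (S : Finset (Fin n)) (hu : u ∈ S) (hv : v ∈ Sᶜ)
    (hcross : ∀ i ∈ S, ∀ j ∈ Sᶜ, deleteEdge A u v i j = 0)
    (hc1 : ((toSimple (deleteEdge A u v)).induce (↑S : Set (Fin n))).Connected)
    (hc2 : ((toSimple (deleteEdge A u v)).induce (↑(Sᶜ) : Set (Fin n))).Connected)
    (a b : ℕ) (ha : S.card = a) (hb : (Sᶜ).card = b) :
    (d : ℝ) - 1 / (a : ℝ) - 1 / (b : ℝ) ≤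
      lambda2 (A.map (fun x => (x : ℝ))) :=
  stmt14_general A hsym hreg u v he S hu hv hcross a b ha hb
end

section
/- For all integers d and n with either (d = 3 and n ≥ 19) or (d ≥ 4 and n ≥ 14), the characteristic polynomial of Q(d,n) is negative at x = d − 1/7 − 1/(n−7); that is, det(xI − Q(d,n)) < 0 at this value of x. -/
open Matrix Finset BigOperators

/-! `Q(d,n)` is tridiagonal, so `det (x • 1 - Q(d,n))` is a four-term continuant. At
`x = d - 1/7 - 1/(n-7)`, clearing denominators leaves `n² · testNumerator d n` over the
positive `4802 (n-7)⁴ (n-4)`, and `testNumerator` has only negative coefficients once it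
is written in `a, b ≥ 0` with `d = 4 + a, n = 14 + b` (or `d = 3, n = 19 + b`). -/

theorem Matrix.det_fin_four_tridiagonal {R : Type*} [CommRing R]
    (a₁ a₂ a₃ a₄ b₁ b₂ b₃ c₁ c₂ c₃ : R) :
    !![a₁, b₁, 0, 0; c₁, a₂, b₂, 0; 0, c₂, a₃, b₃; 0, 0, c₃, a₄].det =
      a₁ * a₂ * a₃ * a₄ - b₁ * c₁ * a₃ * a₄ - a₁ * b₂ * c₂ * a₄ - a₁ * a₂ * b₃ * c₃
        + b₁ * c₁ * b₃ * c₃ := by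
  simp [det_succ_row_zero, Fin.sum_univ_succ, Fin.succAbove]
  ring

lemma det_smul_one_sub_Qmat (x d n : ℝ) :
    (x • (1 : Matrix (Fin 4) (Fin 4) ℝ) - Qmat d n).det =
      (x - d + (d - 1) / (n - 4)) * ((x - (d + 1) / 2) * (x ^ 2 - 1) - (d - 1) ^ 2 / 2 * x)
        - (d - 1) * ((d - 1) / (n - 4)) * (x * (x - (d + 1) / 2) - (d - 1) ^ 2 / 2) := by
  have : x • (1 : Matrix (Fin 4) (Fin 4) ℝ) - Qmat d n =
      !![x - (d + 1) / 2, -((d - 1) / 2), 0, 0;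
         -(d - 1), x, -1, 0;
         0, -1, x, -(d - 1);
         0, 0, -((d - 1) / (n - 4)), x - (d - (d - 1) / (n - 4))] := by
    ext i j
    fin_cases i <;> fin_cases j <;> simp [Qmat]
  rw [this, Matrix.det_fin_four_tridiagonal]
  ring

def testNumerator (d n : ℝ) : ℝ :=
  144060 - 65072 * n + 9729 * n ^ 2 - 481 * n ^ 3
    + d * (-240100 + 101332 * n - 14133 * n ^ 2 + 651 * n ^ 3)
    + d ^ 2 * (96040 - 37044 * n + 4704 * n ^ 2 - 196 * n ^ 3)

lemma det_sub_Qmat_at_testPoint (d n : ℝ) (hn₄ : n ≠ 4) (hn₇ : n ≠ 7) :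
    ((d - 1 / 7 - 1 / (n - 7)) • (1 : Matrix (Fin 4) (Fin 4) ℝ) - Qmat d n).det =
      n ^ 2 * testNumerator d n / (4802 * (n - 7) ^ 4 * (n - 4)) := by
  have h₄ : n - 4 ≠ 0 := sub_ne_zero.mpr hn₄
  have h₇ : n - 7 ≠ 0 := sub_ne_zero.mpr hn₇
  rw [det_smul_one_sub_Qmat, testNumerator]
  field_simp
  ring

lemma testNumerator_neg_of_four_le {d n : ℝ} (hd : 4 ≤ d) (hn : 14 ≤ n) :
    testNumerator d n < 0 := by
  obtain ⟨a, ha, rfl⟩ : ∃ a ≥ 0, d = 4 + a := ⟨d - 4, by linarith, by ring⟩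
  obtain ⟨b, hb, rfl⟩ : ∃ b ≥ 0, n = 14 + b := ⟨n - 14, by linarith, by ring⟩
  have : testNumerator (4 + a) (14 + b) =
      -(15288 + 51184 * b + 14085 * b ^ 2 + 1013 * b ^ 3
        + a * (112504 + 76244 * b + 15015 * b ^ 2 + 917 * b ^ 3)
        + a ^ 2 * (38416 + 20580 * b + 3528 * b ^ 2 + 196 * b ^ 3)) := by
    rw [testNumerator]; ring
  rw [this, neg_lt_zero]
  positivity

lemma testNumerator_three_neg {n : ℝ} (hn : 19 ≤ n) : testNumerator 3 n < 0 := by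
  obtain ⟨b, hb, rfl⟩ : ∃ b ≥ 0, n = 19 + b := ⟨n - 19, by linarith, by ring⟩
  have : testNumerator 3 (19 + b) = -(20250 + 43400 * b + 6978 * b ^ 2 + 292 * b ^ 3) := by
    rw [testNumerator]; ring
  rw [this, neg_lt_zero]
  positivity

/-- for all integers d, n with (d = 3 and n ≥ 19) or (d ≥ 4 and
n ≥ 14), we have det(xI − Q(d,n)) < 0 at x = d − 1/7 − 1/(n−7). -/
theorem stmt16 (d n : ℤ) (h : (d = 3 ∧ 19 ≤ n) ∨ (4 ≤ d ∧ 14 ≤ n)) :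
    Matrix.det
      (((d : ℝ) - 1 / 7 - 1 / ((n : ℝ) - 7)) • (1 : Matrix (Fin 4) (Fin 4) ℝ)
        - Qmat (d : ℝ) (n : ℝ)) < 0 := by
  have hn : (14 : ℝ) ≤ n := by
    rcases h with ⟨-, hn⟩ | ⟨-, hn⟩ <;> exact_mod_cast (by omega : (14 : ℤ) ≤ n)
  have h₇ : (0 : ℝ) < n - 7 := by linarith
  have h₄ : (0 : ℝ) < n - 4 := by linarith
  rw [det_sub_Qmat_at_testPoint _ _ (by linarith) (by linarith)]
  refine div_neg_of_neg_of_pos (mul_neg_of_pos_of_neg (by positivity) ?_) (by positivity)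
  rcases h with ⟨rfl, hn₁₉⟩ | ⟨hd₄, hn₁₄⟩
  · exact_mod_cast testNumerator_three_neg (by exact_mod_cast hn₁₉)
  · exact testNumerator_neg_of_four_le (by exact_mod_cast hd₄) (by exact_mod_cast hn₁₄)
end

section
/- For all integers d ≥ 3 and n ≥ 14, the matrix Q(d,n) has four real eigenvalues, its largest eigenvalue equals d, and its smallest eigenvalue is negative. -/
/-!
Every row of `Q(d,n)` sums to `d`, so `d` is an eigenvalue and the characteristic polynomial
factors as `(x - d) g(x)` with `g = qCubic d E` a monic cubic and `E = (d - 1)/(n - 4)`.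
For `n ≥ 14` we have `10 E ≤ d - 1`, and then `g` takes the signs `-, +, -, +` at
`-(d + 1)/2 < -E < 1 < d`. By the intermediate value theorem its three roots are real, lie
below `d`, and the smallest one is below `-E < 0`.
-/

open Matrix Finset BigOperators

open Polynomial

theorem eigList_eq_of_charpoly_roots_eq {m : ℕ} {A : Matrix (Fin m) (Fin m) ℝ} {l : List ℝ}
    (h : A.charpoly.roots = l) (hl : l.Pairwise (· ≤ ·)) : eigList A = l := by
  rw [eigList, h, Multiset.coe_sort]
  exact List.mergeSort_eq_self _ hl

theorem Polynomial.roots_eq_of_sign_changes {p : ℝ[X]} (hp : p.natDegree ≤ 3) {a b c e : ℝ}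
    (hab : a < b) (hbc : b < c) (hce : c < e) (ha : p.eval a < 0) (hb : 0 < p.eval b)
    (hc : p.eval c < 0) (he : 0 < p.eval e) :
    ∃ r₁ ∈ Set.Ioo a b, ∃ r₂ ∈ Set.Ioo b c, ∃ r₃ ∈ Set.Ioo c e, p.roots = {r₁, r₂, r₃} := by
  have hcont {s : Set ℝ} : ContinuousOn (p.eval ·) s := p.continuous.continuousOn
  obtain ⟨r₁, hr₁, hpr₁⟩ := intermediate_value_Ioo hab.le hcont ⟨ha, hb⟩
  obtain ⟨r₂, hr₂, hpr₂⟩ := intermediate_value_Ioo' hbc.le hcont ⟨hc, hb⟩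
  obtain ⟨r₃, hr₃, hpr₃⟩ := intermediate_value_Ioo hce.le hcont ⟨hc, he⟩
  refine ⟨r₁, hr₁, r₂, hr₂, r₃, hr₃, (Multiset.eq_of_le_of_card_le ?_ ?_).symm⟩
  · have hp0 : p ≠ 0 := fun h => by simp [h] at hb
    refine (Multiset.le_iff_subset ?_).mpr ?_
    · simp only [Multiset.insert_eq_cons, Multiset.nodup_cons, Multiset.mem_cons,
        Multiset.mem_singleton, Multiset.nodup_singleton, and_true]
      refine ⟨?_, ?_⟩ <;> grind
    · simp [Multiset.insert_eq_cons, hp0, hpr₁, hpr₂, hpr₃]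
  · simpa using p.card_roots'.trans hp

noncomputable def qCubic (d E : ℝ) : ℝ[X] :=
  X ^ 3 + C (E - (d + 1) / 2) * X ^ 2 + C (-(d - 1) * (E + d - 1) / 2 - 1) * X
    + C ((d + 1 - E * (d ^ 2 - 3 * d + 4)) / 2)

@[simp]
theorem eval_qCubic (d E x : ℝ) :
    (qCubic d E).eval x = x ^ 3 + (E - (d + 1) / 2) * x ^ 2
      + (-(d - 1) * (E + d - 1) / 2 - 1) * x + (d + 1 - E * (d ^ 2 - 3 * d + 4)) / 2 := by
  simp [qCubic]

theorem natDegree_qCubic_le (d E : ℝ) : (qCubic d E).natDegree ≤ 3 := by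
  unfold qCubic
  compute_degree

theorem charpoly_Qmat (d n : ℝ) :
    (Qmat d n).charpoly = (X - C d) * qCubic d ((d - 1) / (n - 4)) := by
  refine Polynomial.funext fun x => ?_
  rw [eval_charpoly, eval_mul, eval_qCubic, Qmat]
  generalize (d - 1) / (n - 4) = E
  simp [Matrix.det_succ_row_zero, Fin.sum_univ_succ, Fin.succAbove]
  ring

theorem exists_roots_qCubic_eq {d E : ℝ} (hE : 0 < E) (hE10 : 10 * E ≤ d - 1) :
    ∃ r₁ r₂ r₃ : ℝ, r₁ < 0 ∧ r₁ < r₂ ∧ r₂ < r₃ ∧ r₃ < d ∧ (qCubic d E).roots = {r₁, r₂, r₃} := by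
  have hd1 : 0 < d - 1 := by linarith
  obtain ⟨r₁, hr₁, r₂, hr₂, r₃, hr₃, hroots⟩ :=
    (qCubic d E).roots_eq_of_sign_changes (natDegree_qCubic_le d E)
      (a := -((d + 1) / 2)) (b := -E) (c := 1) (e := d) (by linarith) (by linarith) (by linarith)
      (by rw [eval_qCubic]; nlinarith [mul_pos hd1 (show 0 < d + 1 - 2 * E by linarith)])
      (by rw [eval_qCubic]; nlinarith [mul_le_mul_of_nonneg_left hE10 hE.le])
      (by rw [eval_qCubic]; nlinarith [mul_pos (mul_pos hd1 hd1) (show 0 < E + 1 by linarith)])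
      (by rw [eval_qCubic]; nlinarith [mul_pos hE hd1, mul_pos hd1 hd1])
  exact ⟨r₁, r₂, r₃, by linarith [hr₁.2], hr₁.2.trans hr₂.1, hr₂.2.trans hr₃.1, hr₃.2, hroots⟩

/-- for all integers d ≥ 3 and n ≥ 14, the matrix Q(d,n) has four
real eigenvalues (its characteristic polynomial has four real roots counted
with multiplicity), its largest eigenvalue equals d, and its smallest
eigenvalue is negative. -/
theorem stmt17 (d n : ℤ) (hd : 3 ≤ d) (hn : 14 ≤ n) :
    Multiset.card (Qmat (d : ℝ) (n : ℝ)).charpoly.roots = 4 ∧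
    (eigList (Qmat (d : ℝ) (n : ℝ))).getD 3 0 = (d : ℝ) ∧
    (eigList (Qmat (d : ℝ) (n : ℝ))).getD 0 0 < 0 := by
  have hd : (3 : ℝ) ≤ d := by exact_mod_cast hd
  have hn : (14 : ℝ) ≤ n := by exact_mod_cast hn
  have hE : 0 < ((d : ℝ) - 1) / (n - 4) := div_pos (by linarith) (by linarith)
  have hE10 : 10 * (((d : ℝ) - 1) / (n - 4)) ≤ d - 1 := by
    rw [mul_div_assoc', div_le_iff₀ (by linarith)]
    nlinarith
  obtain ⟨r₁, r₂, r₃, hr₁, h₁₂, h₂₃, hr₃, hroots⟩ := exists_roots_qCubic_eq hE hE10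
  have hQ : (Qmat (d : ℝ) n).charpoly.roots = [r₁, r₂, r₃, d] := by
    rw [charpoly_Qmat, roots_mul (mul_ne_zero (X_sub_C_ne_zero _) ?_), roots_X_sub_C, hroots]
    · exact Multiset.coe_eq_coe.mpr (List.perm_append_singleton (d : ℝ) [r₁, r₂, r₃]).symm
    · intro h
      simp [h] at hroots
  have heig : eigList (Qmat (d : ℝ) n) = [r₁, r₂, r₃, d] :=
    eigList_eq_of_charpoly_roots_eq hQ (by grind)
  exact ⟨by simp [hQ], by simp [heig], by simpa [heig]⟩
end
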